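/- arXiv:2502.17954 — 4 statements merged into one kernel-verified Lean document; each statement's English description precedes it below -/
import Mathlib

section
/- Let m, n ≥ 3 be integers and d = gcd(m, n). If ν_2(m) ≤ ν_2(n), then τ(U_m · V_n) = 2·[m, n]; and if ν_2(m) > ν_2(n), then τ(U_m · V_n) = [m, n] · V_d. -/
/-- The first Lucas sequence with parameters `(a, b)`:
`U 0 = 0`, `U 1 = 1`, `U (k+2) = a * U (k+1) + b * U k`. -/
def U (a b : ℤ) : ℕ → ℤ
  | 0 => 0
  | 1 => 1
  | (k + 2) => a * U a b (k + 1) + b * U a b k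

/-- The second Lucas sequence with parameters `(a, b)`:
`V 0 = 2`, `V 1 = a`, `V (k+2) = a * V (k+1) + b * V k`. -/
def V (a b : ℤ) : ℕ → ℤ
  | 0 => 2
  | 1 => a
  | (k + 2) => a * V a b (k + 1) + b * V a b k

/-- The order of appearance of `m` in the first Lucas sequence with parameters `(a, b)`:
the smallest positive integer `k` such that `m ∣ U a b k`. -/
noncomputable def tau (a b : ℤ) (m : ℤ) : ℕ :=
  sInf {k : ℕ | 0 < k ∧ m ∣ U a b k}

/-- The pair `(a, b)` is nondegenerate: `b ≠ 0` and
`(a, b) ∉ {(±2, -1), (±1, -1), (0, ±1), (±1, 0)}`. -/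
def Nondegenerate (a b : ℤ) : Prop :=
  b ≠ 0 ∧ (a, b) ∉ ({(2, -1), (-2, -1), (1, -1), (-1, -1),
    (0, 1), (0, -1), (1, 0), (-1, 0)} : Set (ℤ × ℤ))

namespace Lucas
variable (a b : ℤ)

lemma U0 : U a b 0 = 0 := rfl
lemma U1 : U a b 1 = 1 := rfl
lemma U2 : U a b 2 = a := by simp [U]
lemma Urec (k : ℕ) : U a b (k+2) = a * U a b (k+1) + b * U a b k := rfl
lemma V0 : V a b 0 = 2 := rfl
lemma V1 : V a b 1 = a := rfl
lemma Vrec (k : ℕ) : V a b (k+2) = a * V a b (k+1) + b * V a b k := rfl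

/-- `V k = 2 U (k+1) - a * U k`. -/
lemma V_eq : ∀ k, V a b k = 2 * U a b (k+1) - a * U a b k
  | 0 => by simp [U, V]
  | 1 => by simp [U, V]; ring
  | (k+2) => by
    have h1 := V_eq (k+1)
    have h2 := V_eq k
    have e1 : U a b (k+3) = a * U a b (k+2) + b * U a b (k+1) := rfl
    have e2 : U a b (k+2) = a * U a b (k+1) + b * U a b k := rfl
    rw [Vrec, h1, h2, show k+2+1 = k+3 from rfl, e1, e2]; ring

/-- `2 V (k+1) = (a^2+4b) U k + a * V k`. -/
lemma two_V_succ : ∀ k, 2 * V a b (k+1) = (a^2+4*b) * U a b k + a * V a b k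
  | 0 => by simp [U, V]; ring
  | 1 => by simp [U, V]; ring
  | (k+2) => by
    have h1 := two_V_succ (k+1)
    have h2 := two_V_succ k
    have e1 : V a b (k+3) = a * V a b (k+2) + b * V a b (k+1) := rfl
    have e2 : V a b (k+2) = a * V a b (k+1) + b * V a b k := rfl
    have e3 : U a b (k+2) = a * U a b (k+1) + b * U a b k := rfl
    rw [show k+2+1 = k+3 from rfl, e1, e3]
    rw [e2] at h1 ⊢
    linear_combination a * h1 + b * h2

/-- `2 U (k+1) = a * U k + V k`. -/
lemma two_U_succ (k : ℕ) : 2 * U a b (k+1) = a * U a b k + V a b k := by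
  rw [V_eq]; ring

/-- `V k ^ 2 - Δ U k ^ 2 = 4 (-b)^k`. -/
lemma VV_sub_UU : ∀ k, V a b k ^ 2 - (a^2+4*b) * U a b k ^ 2 = 4 * (-b)^k
  | 0 => by simp [U, V]
  | (k+1) => by
    have h := VV_sub_UU k
    have h1 := two_U_succ a b k
    have h2 := two_V_succ a b k
    have h4 : 4 * (V a b (k+1) ^ 2 - (a^2+4*b) * U a b (k+1) ^ 2)
        = 4 * (4 * (-b)^(k+1)) := by
      have e1 : (2 * V a b (k+1))^2 - (a^2+4*b) * (2 * U a b (k+1))^2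
          = 4 * (V a b (k+1) ^ 2 - (a^2+4*b) * U a b (k+1) ^ 2) := by ring
      rw [← e1, h1, h2]
      linear_combination (-4*b) * h
    exact mul_left_cancel₀ (by norm_num) h4

/-- Addition formula: `U (s+1+t) = U (s+1) U (t+1) + b U s U t`. -/
lemma U_add (s : ℕ) : ∀ t, U a b (s+1+t) = U a b (s+1) * U a b (t+1) + b * U a b s * U a b t
  | 0 => by simp [U]
  | 1 => by
    have : U a b (s+1+1) = a * U a b (s+1) + b * U a b s := rfl
    rw [this]; simp [U]; ring
  | (t+2) => by
    have h1 := U_add s (t+1)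
    have h2 := U_add s t
    have e0 : U a b (s+1+(t+2)) = a * U a b (s+1+(t+1)) + b * U a b (s+1+t) := by
      rw [show s+1+(t+2) = (s+1+t)+2 by omega, show s+1+(t+1) = (s+1+t)+1 by omega]; rfl
    have e1 : U a b (t+3) = a * U a b (t+2) + b * U a b (t+1) := rfl
    have e2 : U a b (t+2) = a * U a b (t+1) + b * U a b t := rfl
    rw [e0, h1, h2, show t+2+1 = t+3 from rfl, e1, e2]; ring

/-- `U (z+y+y) = U (z+y) V y - (-b)^y U z`. -/
lemma U_shift : ∀ (y z : ℕ), U a b (z+y+y) = U a b (z+y) * V a b y - (-b)^y * U a b z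
  | 0, z => by simp [V]; ring
  | 1, z => by
    have : U a b (z+1+1) = a * U a b (z+1) + b * U a b z := rfl
    rw [this]; simp [V]; ring
  | (y+2), z => by
    have h1 := U_shift (y+1) (z+1)
    have h2 := U_shift y (z+2)
    have e0 : U a b (z+(y+2)+(y+2)) = a * U a b (z+1+(y+1)+(y+1)) + b * U a b (z+2+y+y) := by
      rw [show z+(y+2)+(y+2) = (z+2+y+y)+2 by omega, show z+1+(y+1)+(y+1) = (z+2+y+y)+1 by omega]; rfl
    have e1 : V a b (y+2) = a * V a b (y+1) + b * V a b y := rfl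
    have e2 : U a b (z+2) = a * U a b (z+1) + b * U a b z := rfl
    rw [e0, h1, h2, e1, e2, show z+1+(y+1) = z+(y+2) by omega, show z+2+y = z+(y+2) by omega]
    ring

/-- `V (z+y+y) = V (z+y) V y - (-b)^y V z`. -/
lemma V_shift : ∀ (y z : ℕ), V a b (z+y+y) = V a b (z+y) * V a b y - (-b)^y * V a b z
  | 0, z => by simp [V]; ring
  | 1, z => by
    have : V a b (z+1+1) = a * V a b (z+1) + b * V a b z := rfl
    rw [this]; simp [V]; ring
  | (y+2), z => by
    have h1 := V_shift (y+1) (z+1)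
    have h2 := V_shift y (z+2)
    have e0 : V a b (z+(y+2)+(y+2)) = a * V a b (z+1+(y+1)+(y+1)) + b * V a b (z+2+y+y) := by
      rw [show z+(y+2)+(y+2) = (z+2+y+y)+2 by omega, show z+1+(y+1)+(y+1) = (z+2+y+y)+1 by omega]; rfl
    have e1 : V a b (y+2) = a * V a b (y+1) + b * V a b y := rfl
    have e2 : V a b (z+2) = a * V a b (z+1) + b * V a b z := rfl
    rw [e0, h1, h2, e1, e2, show z+1+(y+1) = z+(y+2) by omega, show z+2+y = z+(y+2) by omega]
    ring

/-- Composition: `U (t*k) = U t * Û k` where `Û` has parameters `(V t, -(-b)^t)`. -/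
lemma U_comp (t : ℕ) : ∀ k, U a b (t*k) = U a b t * U (V a b t) (-(-b)^t) k
  | 0 => by simp [U]
  | 1 => by simp [U]
  | (k+2) => by
    have h1 := U_comp t (k+1)
    have h2 := U_comp t k
    have e0 : U a b (t*(k+2)) = U a b (t*(k+1)) * V a b t - (-b)^t * U a b (t*k) := by
      have := U_shift a b t (t*k)
      rw [show t*k+t+t = t*(k+2) by ring, show t*k+t = t*(k+1) by ring] at this
      exact this
    have e1 : U (V a b t) (-(-b)^t) (k+2)
        = V a b t * U (V a b t) (-(-b)^t) (k+1) + (-(-b)^t) * U (V a b t) (-(-b)^t) k := rfl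
    rw [e0, h1, h2, e1]; ring

/-- Composition: `V (t*k) = V̂ k` where `V̂` has parameters `(V t, -(-b)^t)`. -/
lemma V_comp (t : ℕ) : ∀ k, V a b (t*k) = V (V a b t) (-(-b)^t) k
  | 0 => by simp [V]
  | 1 => by simp [V]
  | (k+2) => by
    have h1 := V_comp t (k+1)
    have h2 := V_comp t k
    have e0 : V a b (t*(k+2)) = V a b (t*(k+1)) * V a b t - (-b)^t * V a b (t*k) := by
      have := V_shift a b t (t*k)
      rw [show t*k+t+t = t*(k+2) by ring, show t*k+t = t*(k+1) by ring] at this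
      exact this
    have e1 : V (V a b t) (-(-b)^t) (k+2)
        = V a b t * V (V a b t) (-(-b)^t) (k+1) + (-(-b)^t) * V (V a b t) (-(-b)^t) k := rfl
    rw [e0, h1, h2, e1]; ring

/-! ### Coprimality -/

lemma U_cop_b (hab : IsCoprime a b) : ∀ k, IsCoprime (U a b (k+1)) b ∧ IsCoprime (U a b k) (U a b (k+1))
  | 0 => by simp [U, isCoprime_one_left, isCoprime_zero_left]
  | (k+1) => by
    obtain ⟨h1, h2⟩ := U_cop_b hab k
    have hb : IsCoprime (U a b (k+1)) (b * U a b k) := h1.mul_right h2.symm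
    constructor
    · rw [Urec]
      exact (hab.mul_left h1).add_mul_left_left (U a b k)
    · rw [Urec, add_comm (a * U a b (k+1))]
      exact hb.add_mul_right_right a

lemma U_coprime_b (hab : IsCoprime a b) (k : ℕ) : IsCoprime (U a b (k+1)) b :=
  (U_cop_b a b hab k).1

lemma U_coprime_succ (hab : IsCoprime a b) (k : ℕ) : IsCoprime (U a b k) (U a b (k+1)) :=
  (U_cop_b a b hab k).2

lemma V_coprime_b (hab : IsCoprime a b) : ∀ k, IsCoprime (V a b (k+1)) b
  | 0 => by simpa [V] using hab
  | (k+1) => by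
    have h1 := V_coprime_b hab k
    rw [Vrec]
    exact IsCoprime.add_mul_left_left (hab.mul_left h1) (V a b k)

lemma a_dvd_V_odd : ∀ j, a ∣ V a b (2*j+1)
  | 0 => by simp [V]
  | (j+1) => by
    have h := a_dvd_V_odd j
    have : V a b (2*(j+1)+1) = a * V a b (2*j+2) + b * V a b (2*j+1) := by
      rw [show 2*(j+1)+1 = (2*j+1)+2 by omega]; rfl
    rw [this]
    exact dvd_add (Dvd.intro _ rfl) (Dvd.dvd.mul_left h b)

lemma a_coprime_U_odd (hab : IsCoprime a b) : ∀ j, IsCoprime a (U a b (2*j+1))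
  | 0 => by simp [U, isCoprime_one_right]
  | (j+1) => by
    have h := a_coprime_U_odd hab j
    have : U a b (2*(j+1)+1) = a * U a b (2*j+2) + b * U a b (2*j+1) := by
      rw [show 2*(j+1)+1 = (2*j+1)+2 by omega]; rfl
    rw [this, add_comm]
    exact IsCoprime.add_mul_left_right (hab.mul_right h) (U a b (2*j+2))

/-! ### Positivity and monotonicity -/

variable {a b}

lemma U_pos_aux (ha : 0 < a) (hΔ : 0 < a^2+4*b) :
    ∀ k, 0 ≤ U a b k ∧ 0 < U a b (k+1) ∧ a * U a b k ≤ 2 * U a b (k+1)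
  | 0 => by simp [U]
  | (k+1) => by
    obtain ⟨h0, h1, h2⟩ := U_pos_aux ha hΔ k
    refine ⟨le_of_lt h1, ?_, ?_⟩
    · nlinarith [Urec a b k]
    · nlinarith [Urec a b k]

lemma U_pos (ha : 0 < a) (hΔ : 0 < a^2+4*b) {k : ℕ} (hk : 1 ≤ k) : 0 < U a b k := by
  obtain ⟨k, rfl⟩ := Nat.exists_eq_add_of_le hk
  rw [add_comm]
  exact (U_pos_aux ha hΔ k).2.1

lemma U_nonneg (ha : 0 < a) (hΔ : 0 < a^2+4*b) (k : ℕ) : 0 ≤ U a b k :=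
  (U_pos_aux ha hΔ k).1

lemma V_pos_aux (ha : 0 < a) (hΔ : 0 < a^2+4*b) :
    ∀ k, 0 < V a b k ∧ a * V a b k ≤ 2 * V a b (k+1)
  | 0 => by simp [V]; linarith
  | (k+1) => by
    obtain ⟨h1, h2⟩ := V_pos_aux ha hΔ k
    constructor
    · nlinarith
    · nlinarith [Vrec a b k]

lemma V_pos (ha : 0 < a) (hΔ : 0 < a^2+4*b) (k : ℕ) : 0 < V a b k :=
  (V_pos_aux ha hΔ k).1

lemma a_ge_three (ha : 0 < a) (hΔ : 0 < a^2+4*b) (hb : b < 0) : 3 ≤ a := by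
  nlinarith

lemma U_succ_ge (ha : 0 < a) (hΔ : 0 < a^2+4*b) (hb : b ≠ 0) {k : ℕ} (hk : 1 ≤ k) :
    U a b k ≤ U a b (k+1) := by
  obtain ⟨j, rfl⟩ := Nat.exists_eq_add_of_le hk
  rcases lt_or_gt_of_ne hb with hneg | hpos
  · have h3 := a_ge_three ha hΔ hneg
    have h2 := (U_pos_aux ha hΔ (1+j)).2.2
    have h1 : 0 < U a b (1+j) := by
      rw [add_comm]; exact U_pos ha hΔ (by omega)
    nlinarith
  · have e : U a b (1+j+1) = a * U a b (j+1) + b * U a b j := by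
      rw [show 1+j+1 = j+2 by omega]; rfl
    have h0 := U_nonneg ha hΔ j
    have h1 : 0 < U a b (j+1) := U_pos ha hΔ (by omega)
    rw [e, show 1+j = j+1 by omega]
    nlinarith

lemma U_succ_lt (ha : 0 < a) (hΔ : 0 < a^2+4*b) (hb : b ≠ 0) {k : ℕ} (hk : 2 ≤ k) :
    U a b k < U a b (k+1) := by
  obtain ⟨j, rfl⟩ := Nat.exists_eq_add_of_le hk
  rcases lt_or_gt_of_ne hb with hneg | hpos
  · have h3 := a_ge_three ha hΔ hneg
    have h2 := (U_pos_aux ha hΔ (2+j)).2.2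
    have h1 : 0 < U a b (2+j) := by
      rw [add_comm]; exact U_pos ha hΔ (by omega)
    nlinarith
  · have e : U a b (2+j+1) = a * U a b (j+1+1) + b * U a b (j+1) := by
      rw [show 2+j+1 = (j+1)+2 by omega]; rfl
    have h0 : 0 < U a b (j+1) := U_pos ha hΔ (by omega)
    have h1 : 0 < U a b (j+1+1) := U_pos ha hΔ (by omega)
    rw [e, show 2+j = j+1+1 by omega]
    nlinarith

lemma U_mono (ha : 0 < a) (hΔ : 0 < a^2+4*b) (hb : b ≠ 0) {k l : ℕ} (hk : 1 ≤ k) (hkl : k ≤ l) :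
    U a b k ≤ U a b l := by
  induction l with
  | zero => omega
  | succ n ih =>
    rcases Nat.lt_or_ge k (n+1) with h | h
    · exact le_trans (ih (by omega)) (U_succ_ge ha hΔ hb (by omega))
    · have : k = n+1 := by omega
      rw [this]

lemma U_strict_mono (ha : 0 < a) (hΔ : 0 < a^2+4*b) (hb : b ≠ 0) {k l : ℕ} (hk : 2 ≤ k)
    (hkl : k < l) : U a b k < U a b l := by
  have h1 : U a b k < U a b (k+1) := U_succ_lt ha hΔ hb hk
  exact lt_of_lt_of_le h1 (U_mono ha hΔ hb (by omega) (by omega))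

lemma U_lt_of_lt (ha : 0 < a) (hΔ : 0 < a^2+4*b) (hb : b ≠ 0) {k l : ℕ} (hk : 1 ≤ k)
    (hl : 3 ≤ l) (hkl : k < l) : U a b k < U a b l := by
  rcases Nat.lt_or_ge k 2 with h | h
  · have : k = 1 := by omega
    subst this
    calc U a b 1 ≤ U a b 2 := U_succ_ge ha hΔ hb le_rfl
    _ < U a b 3 := U_succ_lt ha hΔ hb le_rfl
    _ ≤ U a b l := U_mono ha hΔ hb (by omega) hl
  · exact U_strict_mono ha hΔ hb h hkl

lemma U_three_ge (ha : 0 < a) (hΔ : 0 < a^2+4*b) (hb : b ≠ 0) : 2 ≤ U a b 3 := by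
  have e : U a b 3 = a * a + b := by simp [U]
  rcases lt_or_gt_of_ne hb with hneg | hpos
  · have h3 := a_ge_three ha hΔ hneg
    nlinarith
  · nlinarith

lemma U_ge_two (ha : 0 < a) (hΔ : 0 < a^2+4*b) (hb : b ≠ 0) {m : ℕ} (hm : 3 ≤ m) :
    2 ≤ U a b m :=
  le_trans (U_three_ge ha hΔ hb) (U_mono ha hΔ hb (by omega) hm)

lemma V_succ_ge (ha : 0 < a) (hΔ : 0 < a^2+4*b) (hb : b ≠ 0) {k : ℕ} (hk : 1 ≤ k) :
    V a b k ≤ V a b (k+1) := by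
  rcases lt_or_gt_of_ne hb with hneg | hpos
  · have h3 := a_ge_three ha hΔ hneg
    have h2 := (V_pos_aux ha hΔ k).2
    have h1 := (V_pos_aux ha hΔ k).1
    nlinarith
  · obtain ⟨j, rfl⟩ := Nat.exists_eq_add_of_le hk
    rw [add_comm 1 j]
    have h0 := (V_pos_aux ha hΔ j).1
    have h1 := (V_pos_aux ha hΔ (j+1)).1
    rw [Vrec]
    nlinarith

lemma V_mono (ha : 0 < a) (hΔ : 0 < a^2+4*b) (hb : b ≠ 0) {k l : ℕ} (hk : 1 ≤ k) (hkl : k ≤ l) :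
    V a b k ≤ V a b l := by
  induction l with
  | zero => omega
  | succ n ih =>
    rcases Nat.lt_or_ge k (n+1) with h | h
    · exact le_trans (ih (by omega)) (V_succ_ge ha hΔ hb (by omega))
    · have : k = n+1 := by omega
      rw [this]

lemma V_ge_three (ha : 0 < a) (hΔ : 0 < a^2+4*b) (hb : b ≠ 0) {k : ℕ} (hk : 2 ≤ k) :
    3 ≤ V a b k := by
  have h2 : V a b 2 = a^2 + 2*b := by simp [V]; ring
  have : 3 ≤ V a b 2 := by
    rcases lt_or_gt_of_ne hb with hneg | hpos
    · have h3 := a_ge_three ha hΔ hneg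
      nlinarith
    · nlinarith
  exact le_trans this (V_mono ha hΔ hb (by omega) hk)

lemma U_lt_V (ha : 0 < a) (hΔ : 0 < a^2+4*b) (hb : b ≠ 0) {n : ℕ} (hn : 2 ≤ n) :
    U a b n < V a b n := by
  rcases lt_or_gt_of_ne hb with hneg | hpos
  · have h := VV_sub_UU a b n
    have hbn : (1:ℤ) ≤ (-b)^n := one_le_pow₀ (by linarith)
    have hU := U_pos ha hΔ (show 1 ≤ n by omega)
    have hV := V_pos ha hΔ n
    nlinarith
  · obtain ⟨j, rfl⟩ := Nat.exists_eq_add_of_le hn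
    have hVeq := V_eq a b (2+j)
    have e : U a b (2+j+1) = a * U a b (j+1+1) + b * U a b (j+1) := by
      rw [show 2+j+1 = (j+1)+2 by omega]; rfl
    have h1 : 0 < U a b (j+1) := U_pos ha hΔ (by omega)
    have h2 : U a b (2+j) = U a b (j+1+1) := by rw [show 2+j = j+1+1 by omega]
    have h3 : 0 < U a b (j+1+1) := U_pos ha hΔ (by omega)
    rw [hVeq, e, h2]
    nlinarith

/-! ### Divisibility -/

lemma U_dvd_U_mul (t k : ℕ) : U a b t ∣ U a b (t*k) := by
  rw [U_comp]; exact Dvd.intro _ rfl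

lemma U_dvd_U_of_dvd {t s : ℕ} (h : t ∣ s) : U a b t ∣ U a b s := by
  obtain ⟨k, rfl⟩ := h; exact U_dvd_U_mul t k

lemma V_dvd_U_two_mul (t : ℕ) : V a b t ∣ U a b (2*t) := by
  have := U_shift a b t 0
  rw [zero_add] at this
  rw [show 2*t = t+t by ring, this, U0, mul_zero, sub_zero]
  exact Dvd.intro_left _ rfl

lemma V_dvd_V_odd_mul (t j : ℕ) : V a b t ∣ V a b (t*(2*j+1)) := by
  rw [V_comp]
  have := a_dvd_V_odd (V a b t) (-(-b)^t) j
  exact this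

/-- Euclidean descent: a common divisor of `U j` and `U k` divides `U (gcd j k)`. -/
lemma dvd_U_gcd (hab : IsCoprime a b) (x : ℤ) : ∀ (j k : ℕ), x ∣ U a b j → x ∣ U a b k →
    x ∣ U a b (Nat.gcd j k) := by
  intro j
  induction j using Nat.strong_induction_on with
  | _ j ih =>
    intro k hj hk
    rcases Nat.eq_zero_or_pos j with rfl | hjpos
    · simpa [Nat.gcd_zero_left] using hk
    · rw [Nat.gcd_rec]
      have hkey : x ∣ U a b (k % j) := by
        have hdiv : k = j * (k/j) + k % j := (Nat.div_add_mod k j).symm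
        have hjj : x ∣ U a b (j * (k/j)) := dvd_trans hj (U_dvd_U_mul j _)
        rcases Nat.eq_zero_or_pos (j * (k/j)) with hz | hpos
        · rw [hz, zero_add] at hdiv; rwa [← hdiv]
        · obtain ⟨m, hm⟩ : ∃ m, j * (k/j) = m + 1 := ⟨j * (k/j) - 1, by omega⟩
          have hadd := U_add a b m (k % j)
          rw [← hm] at hadd
          rw [hdiv, hadd] at hk
          rw [hm] at hjj hk
          -- hk : x ∣ U (m+1) * U (k%j+1) + b * U m * U (k%j), hjj : x ∣ U (m+1)
          have hprod : x ∣ b * U a b m * U a b (k % j) :=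
            (dvd_add_right (hjj.mul_right _)).mp hk
          have hc1 : IsCoprime x b :=
            IsCoprime.of_isCoprime_of_dvd_left (U_coprime_b a b hab m) hjj
          have hc2 : IsCoprime x (U a b m) :=
            IsCoprime.of_isCoprime_of_dvd_left
              ((U_coprime_succ a b hab m).symm) hjj
          have : IsCoprime x (b * U a b m) := hc1.mul_right hc2
          exact this.dvd_of_dvd_mul_left hprod
      exact ih (k % j) (Nat.mod_lt k hjpos) j hkey hj

lemma dvd_two_of_dvd_U_V (hab : IsCoprime a b) {x : ℤ} {n : ℕ} (hU : x ∣ U a b n)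
    (hV : x ∣ V a b n) : x ∣ 2 := by
  have h2 : x ∣ 2 * U a b (n+1) := by
    have : 2 * U a b (n+1) = V a b n + a * U a b n := by rw [V_eq]; ring
    rw [this]
    exact dvd_add hV (hU.mul_left a)
  have hc : IsCoprime x (U a b (n+1)) :=
    IsCoprime.of_isCoprime_of_dvd_left (U_coprime_succ a b hab n).symm.symm hU
  exact hc.dvd_of_dvd_mul_right h2

lemma index_dvd_of_U_dvd (hab : IsCoprime a b) (ha : 0 < a) (hΔ : 0 < a^2+4*b) (hb : b ≠ 0)
    {m k : ℕ} (hm2 : 2 ≤ U a b m) (hm : 1 ≤ m) (h : U a b m ∣ U a b k) : m ∣ k := by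
  have hg : U a b m ∣ U a b (Nat.gcd m k) := dvd_U_gcd hab _ m k dvd_rfl h
  rcases Nat.eq_zero_or_pos k with rfl | hk
  · exact Dvd.intro 0 rfl
  set g := Nat.gcd m k with hgdef
  have hgpos : 1 ≤ g := Nat.pos_of_ne_zero (by
    intro h0
    rw [hgdef] at h0
    have := Nat.eq_zero_of_gcd_eq_zero_left h0
    omega)
  by_cases hcase : g = m
  · rw [← hcase]; exact Nat.gcd_dvd_right _ _
  · exfalso
    have hgm : g < m := lt_of_le_of_ne (Nat.le_of_dvd (by omega) (Nat.gcd_dvd_left m k)) hcase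
    have hlt : U a b g < U a b m := by
      rcases Nat.lt_or_ge m 3 with h3 | h3
      · have : m = 2 := by omega
        subst this
        have : g = 1 := by omega
        rw [this]
        calc U a b 1 = 1 := rfl
        _ < 2 := by norm_num
        _ ≤ U a b 2 := hm2
      · exact U_lt_of_lt ha hΔ hb hgpos h3 hgm
    have hpos : 0 < U a b g := U_pos ha hΔ hgpos
    have := Int.le_of_dvd hpos hg
    omega

lemma two_mul_index_dvd_of_V_dvd (hab : IsCoprime a b) (ha : 0 < a) (hΔ : 0 < a^2+4*b)
    (hb : b ≠ 0) {n k : ℕ} (hn : 2 ≤ n) (hk : 1 ≤ k) (h : V a b n ∣ U a b k) : 2*n ∣ k := by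
  have h2n : V a b n ∣ U a b (2*n) := V_dvd_U_two_mul n
  have hg : V a b n ∣ U a b (Nat.gcd (2*n) k) := dvd_U_gcd hab _ (2*n) k h2n h
  set g := Nat.gcd (2*n) k with hgdef
  have hgdvd : g ∣ 2*n := Nat.gcd_dvd_left _ _
  have hgpos : 1 ≤ g := Nat.pos_of_ne_zero (by
    intro h0
    rw [hgdef] at h0
    have := Nat.eq_zero_of_gcd_eq_zero_right h0
    omega)
  by_cases hcase : g = 2*n
  · rw [← hcase]; exact Nat.gcd_dvd_right _ _
  · exfalso
    have hgn : g ≤ n := by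
      rcases hgdvd with ⟨c, hc⟩
      rcases Nat.lt_or_ge c 2 with hc2 | hc2
      · interval_cases c <;> omega
      · have : g * 2 ≤ g * c := Nat.mul_le_mul_left g hc2
        omega
    have hle : U a b g ≤ U a b n := U_mono ha hΔ hb hgpos hgn
    have hltV : U a b n < V a b n := U_lt_V ha hΔ hb hn
    have hpos : 0 < U a b g := U_pos ha hΔ hgpos
    have := Int.le_of_dvd hpos hg
    omega

/-- `U (L(j+1)) = (j+1) U L c^j + s (U L)^2`, `U (L(j+1)+1) = c^(j+1) + r U L`
where `c = U (L+1)`. -/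
lemma rep (l : ℕ) : ∀ j : ℕ, ∃ s r : ℤ,
    U a b ((l+1)*(j+1)) = ((j:ℤ)+1) * U a b (l+1) * (U a b (l+2))^j + s * (U a b (l+1))^2
    ∧ U a b ((l+1)*(j+1)+1) = (U a b (l+2))^(j+1) + r * U a b (l+1)
  | 0 => ⟨0, 0, by simp, by simp⟩
  | (j+1) => by
    obtain ⟨s, r, h1, h2⟩ := rep l j
    have hbl : b * U a b l = U a b (l+2) - a * U a b (l+1) := by
      rw [Urec]; ring
    have hadd1 := U_add a b l ((l+1)*(j+1))
    have hadd2 := U_add a b l ((l+1)*(j+1)+1)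
    have eA : (l+1)*(j+2) = l+1+((l+1)*(j+1)) := by ring
    have eB : (l+1)*(j+2)+1 = l+1+((l+1)*(j+1)+1) := by ring
    have eC : (l+1)*(j+1)+1+1 = (l+1)*(j+1)+2 := by ring
    refine ⟨r + s * U a b (l+2) - a*((j:ℤ)+1)*(U a b (l+2))^j - a*s*U a b (l+1),
      ?_, ?_, ?_⟩
    · exact U a b ((l+1)*(j+1)+2) + r * U a b (l+2) - a * (U a b (l+2))^(j+1)
        - a * r * U a b (l+1)
    · rw [eA, hadd1, hbl, h1, h2]
      push_cast
      ring
    · rw [eB, hadd2, hbl, h2, eC]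
      ring

/-- `2^k Û (k+1) = (k+1) α^k + s (α² + 4β)`. -/
lemma cong (α β : ℤ) : ∀ k : ℕ, ∃ s : ℤ,
    2^k * U α β (k+1) = ((k:ℤ)+1) * α^k + s * (α^2 + 4*β)
  | 0 => ⟨0, by simp [U]⟩
  | 1 => ⟨0, by simp [U]⟩
  | (k+2) => by
    obtain ⟨s1, h1⟩ := cong α β (k+1)
    obtain ⟨s2, h2⟩ := cong α β k
    refine ⟨((k:ℤ)+1) * α^k + 2*α*s1 + 4*β*s2, ?_⟩
    have e : U α β (k+3) = α * U α β (k+2) + β * U α β (k+1) := rfl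
    have : 2^(k+2) * U α β (k+3) = 2*α*(2^(k+1) * U α β (k+2)) + 4*β*(2^k * U α β (k+1)) := by
      rw [e]; ring
    rw [show k+2+1 = k+3 from rfl, this, h1, h2]
    push_cast
    ring

/-! ### Valuations -/

/-- The `p`-adic valuation of a nonzero integer. -/
def nu (p : ℕ) (x : ℤ) : ℕ := x.natAbs.factorization p

lemma nu_pow_dvd {p : ℕ} (hp : p.Prime) {x : ℤ} (hx : x ≠ 0) (k : ℕ) :
    (p:ℤ)^k ∣ x ↔ k ≤ nu p x := by
  rw [show ((p:ℤ))^k = ((p^k : ℕ) : ℤ) by push_cast; ring, Int.natCast_dvd]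
  exact (Nat.Prime.pow_dvd_iff_le_factorization hp (Int.natAbs_ne_zero.mpr hx))

lemma nu_dvd {p : ℕ} (hp : p.Prime) {x : ℤ} (hx : x ≠ 0) :
    (p:ℤ) ∣ x ↔ 1 ≤ nu p x := by
  have := nu_pow_dvd hp hx 1
  rwa [pow_one] at this

lemma nu_eq_zero_of_not_dvd {p : ℕ} (hp : p.Prime) {x : ℤ} (hx : x ≠ 0)
    (h : ¬ (p:ℤ) ∣ x) : nu p x = 0 := by
  rw [nu_dvd hp hx] at h; omega

lemma nu_mul {p : ℕ} (hp : p.Prime) {x y : ℤ} (hx : x ≠ 0) (hy : y ≠ 0) :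
    nu p (x*y) = nu p x + nu p y := by
  unfold nu
  rw [Int.natAbs_mul, Nat.factorization_mul (Int.natAbs_ne_zero.mpr hx)
    (Int.natAbs_ne_zero.mpr hy)]
  rfl

lemma nu_pow {p : ℕ} (hp : p.Prime) {x : ℤ} (hx : x ≠ 0) (k : ℕ) :
    nu p (x^k) = k * nu p x := by
  induction k with
  | zero => simp [nu]
  | succ n ih =>
    rw [pow_succ, nu_mul hp (pow_ne_zero n hx) hx, ih]; ring

lemma nu_sum_eq {p : ℕ} (hp : p.Prime) {y z : ℤ} {v : ℕ}
    (h1 : (p:ℤ)^v ∣ y) (h2 : ¬ (p:ℤ)^(v+1) ∣ y) (h3 : (p:ℤ)^(v+1) ∣ z) :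
    nu p (y + z) = v := by
  have hy : y ≠ 0 := by rintro rfl; exact h2 (dvd_zero _)
  have hyz : y + z ≠ 0 := by
    rintro h
    have : y = -z := by linarith
    rw [this] at h2
    exact h2 ((dvd_neg).mpr h3)
  have hd : (p:ℤ)^v ∣ y + z := dvd_add h1 (dvd_trans (pow_dvd_pow _ (by omega)) h3)
  have hnd : ¬ (p:ℤ)^(v+1) ∣ y + z := by
    intro h
    exact h2 (by simpa using dvd_sub h h3)
  rw [nu_pow_dvd hp hyz] at hd
  rw [nu_pow_dvd hp hyz] at hnd
  omega

lemma dvd_iff_nu {x y : ℤ} (hx : x ≠ 0) (hy : y ≠ 0) :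
    x ∣ y ↔ ∀ p : ℕ, p.Prime → nu p x ≤ nu p y := by
  rw [← Int.natAbs_dvd_natAbs, ← Nat.factorization_le_iff_dvd (Int.natAbs_ne_zero.mpr hx)
    (Int.natAbs_ne_zero.mpr hy), Finsupp.le_def]
  constructor
  · intro h p hp; exact h p
  · intro h p
    by_cases hp : p.Prime
    · exact h p hp
    · simp [Nat.factorization_eq_zero_of_not_prime _ hp]

lemma nu_natCast (p : ℕ) (n : ℕ) : nu p (n : ℤ) = n.factorization p := by
  simp [nu]

lemma nu_self_pow_dvd {p : ℕ} (hp : p.Prime) {x : ℤ} (hx : x ≠ 0) :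
    (p:ℤ)^(nu p x) ∣ x := (nu_pow_dvd hp hx _).mpr le_rfl

lemma nu_not_succ_dvd {p : ℕ} (hp : p.Prime) {x : ℤ} (hx : x ≠ 0) :
    ¬ (p:ℤ)^(nu p x + 1) ∣ x := by rw [nu_pow_dvd hp hx]; omega

lemma not_dvd_of_isCoprime {p : ℕ} (hp : p.Prime) {x y : ℤ} (h : IsCoprime x y)
    (hpx : (p:ℤ) ∣ x) : ¬ (p:ℤ) ∣ y := by
  intro hpy
  have : IsUnit ((p:ℤ)) := h.isUnit_of_dvd' hpx hpy
  rw [Int.isUnit_iff] at this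
  have := hp.two_le
  omega

/-! ### Lifting the exponent for primes dividing `a` -/

section LTE

variable (hab : IsCoprime a b) (ha : 0 < a) (hΔ : 0 < a^2+4*b) (hb : b ≠ 0)
variable {p : ℕ} (hp : p.Prime) (hpa : (p:ℤ) ∣ a)

include hab hp hpa in
lemma p_not_dvd_U_odd (j : ℕ) : ¬ (p:ℤ) ∣ U a b (2*j+1) :=
  not_dvd_of_isCoprime hp (a_coprime_U_odd a b hab j) hpa

include hab ha hΔ hb hp hpa in
lemma p_dvd_U_even {L : ℕ} (hL : 2 ∣ L) : (p:ℤ) ∣ U a b L := by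
  have : U a b 2 ∣ U a b L := U_dvd_U_of_dvd hL
  rw [U2] at this
  exact dvd_trans hpa this

include hab ha hΔ hb in
lemma nu_two_V_even (h2a : (2:ℤ) ∣ a) {L : ℕ} (hL : 2 ∣ L) (hL1 : 1 ≤ L) :
    nu 2 (V a b L) = 1 := by
  have hbodd : ¬ (2:ℤ) ∣ b := not_dvd_of_isCoprime Nat.prime_two
    (by exact_mod_cast hab) (by exact_mod_cast h2a)
  have h2U : (2:ℤ) ∣ U a b L := p_dvd_U_even hab ha hΔ hb Nat.prime_two
    (by exact_mod_cast h2a) hL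
  have h4Δ : (4:ℤ) ∣ (a^2+4*b) := by
    obtain ⟨a', rfl⟩ := h2a
    exact ⟨a'^2 + b, by ring⟩
  have hVpos := V_pos ha hΔ L
  have hUpos := U_pos ha hΔ hL1
  have hVsq : V a b L ^ 2 = (a^2+4*b) * U a b L ^ 2 + 4 * (-b)^L := by
    have := VV_sub_UU a b L
    linarith
  -- ν₂ (V L ^ 2) = 2
  have hnu2 : nu 2 (V a b L ^ 2) = 2 := by
    rw [hVsq, add_comm]
    apply nu_sum_eq Nat.prime_two (v := 2)
    · exact ⟨(-b)^L, by norm_num⟩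
    · intro hdvd
      have h8 : (8:ℤ) ∣ 4 * (-b)^L := by exact_mod_cast (by norm_num : ((2:ℤ))^(2+1) = 8) ▸ hdvd
      have : (2:ℤ) ∣ (-b)^L := by
        obtain ⟨c, hc⟩ := h8
        exact ⟨c, by linarith⟩
      have := Int.Prime.dvd_pow' (by norm_num) this
      rw [dvd_neg] at this
      exact hbodd this
    · obtain ⟨d, hd⟩ := h4Δ
      obtain ⟨u, hu⟩ := h2U
      exact ⟨2 * d * u^2, by rw [hd, hu]; ring⟩
  have hne : V a b L ≠ 0 := ne_of_gt hVpos
  have := nu_pow Nat.prime_two hne 2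
  rw [hnu2] at this
  omega

include hab ha hΔ hb hp hpa in
lemma nu_step {L : ℕ} (hL : 2 ∣ L) (hL1 : 1 ≤ L) :
    nu p (U a b (L*p)) = nu p (U a b L) + 1 := by
  have hUL : U a b L ≠ 0 := ne_of_gt (U_pos ha hΔ hL1)
  have hULp : U a b (L*p) ≠ 0 := ne_of_gt (U_pos ha hΔ (by
    have := hp.two_le; exact Nat.le_trans hL1 (Nat.le_mul_of_pos_right L (by omega))))
  have hcomp : U a b (L*p) = U a b L * U (V a b L) (-(-b)^L) p := U_comp a b L p
  have hW : U (V a b L) (-(-b)^L) p ≠ 0 := by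
    intro h0
    rw [h0, mul_zero] at hcomp
    exact hULp hcomp
  have hpUL : (p:ℤ) ∣ U a b L := p_dvd_U_even hab ha hΔ hb hp hpa hL
  rcases eq_or_ne p 2 with rfl | hp2
  · -- p = 2 : U (2L) = U L * V L
    have h2L : U a b (L*2) = U a b L * V a b L := by
      rw [show L*2 = 2*L by ring]
      have := U_shift a b L 0
      rw [zero_add] at this
      rw [show 2*L = L+L by ring, this, U0, mul_zero, sub_zero]
    rw [h2L, nu_mul hp hUL (ne_of_gt (V_pos ha hΔ L)),
      nu_two_V_even hab ha hΔ hb (by exact_mod_cast hpa) hL hL1]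
  · -- p odd
    have hpodd : ¬ (p:ℤ) ∣ 2 := by
      intro h
      rw [show (2:ℤ) = ((2:ℕ):ℤ) by norm_num, Int.natCast_dvd_natCast] at h
      have := (Nat.prime_dvd_prime_iff_eq hp Nat.prime_two).mp h
      exact hp2 this
    have hpV : ¬ (p:ℤ) ∣ V a b L := by
      intro h
      have := dvd_two_of_dvd_U_V hab hpUL h
      exact hpodd this
    -- congruence: 2^(p-1) * W = p * (V L)^(p-1) + s * Δ * (U L)^2
    obtain ⟨q, hq⟩ : ∃ q, p = q + 1 := ⟨p - 1, by have := hp.two_le; omega⟩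
    obtain ⟨s, hs⟩ := cong (V a b L) (-(-b)^L) q
    rw [← hq] at hs
    have hDelta : (V a b L)^2 + 4 * (-(-b)^L) = (a^2+4*b) * U a b L ^ 2 := by
      have := VV_sub_UU a b L
      linarith
    rw [hDelta] at hs
    have hcast : ((q:ℤ)+1) = (p:ℤ) := by rw [hq]; push_cast; ring
    rw [hcast] at hs
    -- ν_p of RHS is 1
    have hnu1 : nu p ((p:ℤ) * (V a b L)^(q) + s * ((a^2+4*b) * U a b L ^ 2)) = 1 := by
      apply nu_sum_eq hp (v := 1)
      · exact ⟨(V a b L)^q, by rw [pow_one]⟩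
      · intro hdvd
        have hppr : Prime ((p:ℕ) : ℤ) := Nat.prime_iff_prime_int.mp hp
        have hdvd' : (p:ℤ) ∣ (V a b L)^q := by
          rw [show ((p:ℤ))^(1+1) = p * p by ring] at hdvd
          exact (mul_dvd_mul_iff_left (show (p:ℤ) ≠ 0 by exact_mod_cast hp.pos.ne')).mp hdvd
        exact hpV (hppr.dvd_of_dvd_pow hdvd')
      · obtain ⟨u, hu⟩ := hpUL
        exact ⟨s * (a^2+4*b) * u^2, by rw [hu]; ring⟩
    rw [← hs] at hnu1
    have h2q : ((2:ℤ))^q ≠ 0 := by positivity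
    rw [nu_mul hp h2q hW, nu_pow hp (by norm_num) q,
      nu_eq_zero_of_not_dvd hp (by norm_num) hpodd, mul_zero, zero_add] at hnu1
    rw [hcomp, nu_mul hp hUL hW, hnu1]

end LTE

lemma U3 : U a b 3 = a*a + b := by simp [U]

section LTE2

variable (hab : IsCoprime a b) (ha : 0 < a) (hΔ : 0 < a^2+4*b) (hb : b ≠ 0)
variable {p : ℕ} (hp : p.Prime) (hpa : (p:ℤ) ∣ a)

include hab hp hpa in
lemma p_not_dvd_U3 : ¬ (p:ℤ) ∣ U a b 3 := by
  intro h
  rw [U3] at h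
  have hpb : (p:ℤ) ∣ b := by
    have : b = (a*a+b) - a*a := by ring
    rw [this]
    exact dvd_sub h (hpa.mul_right a)
  exact not_dvd_of_isCoprime hp hab hpa hpb

include hab ha hΔ hb hp hpa in
lemma nu_U_two_mul : ∀ j : ℕ, 1 ≤ j → nu p (U a b (2*j)) = nu p a + j.factorization p := by
  intro j
  induction j using Nat.strong_induction_on with
  | _ j ih =>
    intro hj1
    have ha0 : a ≠ 0 := ne_of_gt ha
    have hept : 1 ≤ nu p a := (nu_dvd hp ha0).mp hpa
    by_cases hpj : p ∣ j
    · obtain ⟨j', rfl⟩ := hpj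
      have hj'1 : 1 ≤ j' := by
        rcases Nat.eq_zero_or_pos j' with rfl | h
        · simp at hj1
        · exact h
      have hj'lt : j' < p * j' := by
        have := hp.two_le; nlinarith
      have e1 : 2*(p*j') = (2*j')*p := by ring
      rw [e1, nu_step hab ha hΔ hb hp hpa ⟨j', rfl⟩ (by omega),
        ih j' hj'lt hj'1]
      have : (p*j').factorization p = 1 + j'.factorization p := by
        rw [Nat.factorization_mul (by have := hp.two_le; omega) (by omega)]
        simp [hp.factorization_self]
      rw [this]
      ring
    · have hfj : j.factorization p = 0 := Nat.factorization_eq_zero_of_not_dvd hpj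
      obtain ⟨j', rfl⟩ : ∃ j', j = j' + 1 := ⟨j - 1, by omega⟩
      obtain ⟨s, r, h1, _⟩ := rep 1 j'
      rw [show (1+1)*(j'+1) = 2*(j'+1) by ring, U2] at h1
      set c := U a b (1+2) with hc
      have hcne : c ≠ 0 := ne_of_gt (U_pos ha hΔ (by omega))
      have hpc : ¬ (p:ℤ) ∣ c := by
        rw [hc, show (1+2 : ℕ) = 3 from rfl]
        exact p_not_dvd_U3 hab hp hpa
      have hjne : ((j':ℤ)+1) ≠ 0 := by positivity
      set e := nu p a with he
      have hy : nu p (((j':ℤ)+1) * a * c^j') = e := by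
        rw [nu_mul hp (mul_ne_zero hjne ha0) (pow_ne_zero _ hcne),
          nu_mul hp hjne ha0, nu_pow hp hcne,
          nu_eq_zero_of_not_dvd hp hcne hpc,
          show ((j':ℤ)+1) = (((j'+1 : ℕ):ℤ)) by push_cast; ring,
          nu_natCast, hfj]
        ring
      rw [h1, hfj, add_zero, nu_sum_eq hp (v := e)]
      · rw [← hy]
        exact nu_self_pow_dvd hp (by
          refine mul_ne_zero (mul_ne_zero hjne ha0) (pow_ne_zero _ hcne))
      · rw [← hy]
        exact nu_not_succ_dvd hp (mul_ne_zero (mul_ne_zero hjne ha0) (pow_ne_zero _ hcne))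
      · have h2e : (p:ℤ)^(e+1) ∣ a^2 := by
          have : (p:ℤ)^(2*e) ∣ a^2 := by
            rw [show a^2 = a*a by ring, two_mul, pow_add]
            exact mul_dvd_mul (nu_self_pow_dvd hp ha0) (nu_self_pow_dvd hp ha0)
          exact dvd_trans (pow_dvd_pow _ (by omega)) this
        exact dvd_trans h2e ⟨s, by ring⟩

include hab ha hΔ hb hp hpa in
lemma nu_V_odd (w : ℕ) (hw : 1 ≤ 2*w+1) :
    nu p (V a b (2*w+1)) = nu p a + (2*w+1).factorization p := by
  have hUodd : nu p (U a b (2*w+1)) = 0 :=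
    nu_eq_zero_of_not_dvd hp (ne_of_gt (U_pos ha hΔ (by omega)))
      (p_not_dvd_U_odd hab hp hpa w)
  have h2N : U a b (2*(2*w+1)) = U a b (2*w+1) * V a b (2*w+1) := by
    have := U_shift a b (2*w+1) 0
    rw [zero_add] at this
    rw [show 2*(2*w+1) = (2*w+1)+(2*w+1) by ring, this, U0, mul_zero, sub_zero]
  have := nu_U_two_mul hab ha hΔ hb hp hpa (2*w+1) (by omega)
  rw [h2N, nu_mul hp (ne_of_gt (U_pos ha hΔ (by omega))) (ne_of_gt (V_pos ha hΔ _)), hUodd,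
    zero_add] at this
  exact this

end LTE2

lemma nu_le_of_dvd {p : ℕ} (hp : p.Prime) {x y : ℤ} (hx : x ≠ 0) (hy : y ≠ 0)
    (h : x ∣ y) : nu p x ≤ nu p y := (dvd_iff_nu hx hy).mp h p hp

section Core

variable (hab : IsCoprime a b) (ha : 0 < a) (hΔ : 0 < a^2+4*b) (hb : b ≠ 0)
variable {M N : ℕ} (hM2 : 2 ∣ M) (hN2 : ¬ 2 ∣ N) (hN1 : 1 ≤ N) (hMN : Nat.Coprime M N)

include hM2 hN2 hMN in
lemma gcd_M_twoN : Nat.gcd M (2*N) = 2 := by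
  have h2 : 2 ∣ Nat.gcd M (2*N) := Nat.dvd_gcd hM2 ⟨N, rfl⟩
  have hdN : Nat.Coprime (Nat.gcd M (2*N)) N :=
    Nat.Coprime.coprime_dvd_left (Nat.gcd_dvd_left _ _) hMN
  have hd2 : Nat.gcd M (2*N) ∣ 2 := hdN.dvd_of_dvd_mul_right (Nat.gcd_dvd_right _ _)
  exact Nat.dvd_antisymm hd2 h2

include hab hM2 hN2 hMN in
lemma dvd_a_of_dvd_UM_VN {x : ℤ} (hU : x ∣ U a b M) (hV : x ∣ V a b N) : x ∣ a := by
  have h1 : x ∣ U a b (2*N) := dvd_trans hV (V_dvd_U_two_mul N)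
  have h2 : x ∣ U a b (Nat.gcd M (2*N)) := dvd_U_gcd hab x M (2*N) hU h1
  rwa [gcd_M_twoN hM2 hN2 hMN, U2] at h2

include hab ha hΔ hb hM2 hN2 hN1 hMN in
lemma key_lemma (hMpos : 2 ≤ M) {t : ℕ} (ht : 1 ≤ t) :
    (U a b M * V a b N ∣ U a b (M*N*t) ↔ a.toNat ∣ t) := by
  obtain ⟨M₂, rfl⟩ := hM2
  have hM₂ : 1 ≤ M₂ := by omega
  obtain ⟨w, hw⟩ : ∃ w, N = 2*w+1 := ⟨N/2, by omega⟩
  have hUMne : U a b (2*M₂) ≠ 0 := ne_of_gt (U_pos ha hΔ (by omega))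
  have hVNne : V a b N ≠ 0 := ne_of_gt (V_pos ha hΔ N)
  have hXne : U a b (2*M₂) * V a b N ≠ 0 := mul_ne_zero hUMne hVNne
  have hMNt1 : 1 ≤ 2*M₂*N*t := by
    have : 0 < 2*M₂*N*t := by positivity
    omega
  have hYne : U a b (2*M₂*N*t) ≠ 0 := ne_of_gt (U_pos ha hΔ hMNt1)
  have hatoNat : (a.toNat : ℤ) = a := Int.toNat_of_nonneg (le_of_lt ha)
  have hanatAbs : a.natAbs = a.toNat := by omega
  have ha0 : a ≠ 0 := ne_of_gt ha
  have hta : a.toNat ≠ 0 := by omega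
  -- expansions for p ∣ a
  have expand : ∀ p : ℕ, p.Prime → (p:ℤ) ∣ a →
      (nu p (U a b (2*M₂)) = nu p a + M₂.factorization p
      ∧ nu p (V a b N) = nu p a + N.factorization p
      ∧ nu p (U a b (2*M₂*N*t)) = nu p a + M₂.factorization p + N.factorization p
          + t.factorization p) := by
    intro p hp hpa
    refine ⟨nu_U_two_mul hab ha hΔ hb hp hpa M₂ hM₂, ?_, ?_⟩
    · rw [hw]
      exact nu_V_odd hab ha hΔ hb hp hpa w (by omega)
    · rw [show 2*M₂*N*t = 2*(M₂*N*t) by ring,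
        nu_U_two_mul hab ha hΔ hb hp hpa (M₂*N*t) (by
          have : 0 < M₂*N*t := by positivity
          omega),
        Nat.factorization_mul (by positivity) (by omega),
        Nat.factorization_mul (by omega) (by omega)]
      simp only [Finsupp.coe_add, Pi.add_apply]
      ring
  -- for p not dividing a, nu X ≤ nu Y always
  have hother : ∀ p : ℕ, p.Prime → ¬ (p:ℤ) ∣ a →
      nu p (U a b (2*M₂) * V a b N) ≤ nu p (U a b (2*M₂*N*t)) := by
    intro p hp hpa
    have hmin : ¬ ((p:ℤ) ∣ U a b (2*M₂) ∧ (p:ℤ) ∣ V a b N) := by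
      rintro ⟨h1, h2⟩
      exact hpa (dvd_a_of_dvd_UM_VN hab ⟨M₂, rfl⟩ hN2 hMN h1 h2)
    have hUdvdY : U a b (2*M₂) ∣ U a b (2*M₂*N*t) :=
      U_dvd_U_of_dvd ⟨N*t, by ring⟩
    have hVdvdY : V a b N ∣ U a b (2*M₂*N*t) := by
      have h1 : V a b N ∣ U a b (2*N) := V_dvd_U_two_mul N
      exact dvd_trans h1 (U_dvd_U_of_dvd ⟨M₂*t, by ring⟩)
    rw [nu_mul hp hUMne hVNne]
    rcases not_and_or.mp hmin with h | h
    · rw [nu_eq_zero_of_not_dvd hp hUMne h, zero_add]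
      exact nu_le_of_dvd hp hVNne hYne hVdvdY
    · rw [nu_eq_zero_of_not_dvd hp hVNne h, add_zero]
      exact nu_le_of_dvd hp hUMne hYne hUdvdY
  constructor
  · intro hdvd
    rw [← Nat.factorization_le_iff_dvd hta (by omega), Finsupp.le_def]
    intro p
    by_cases hp : p.Prime
    · by_cases hpa : (p:ℤ) ∣ a
      · obtain ⟨e1, e2, e3⟩ := expand p hp hpa
        have hle := nu_le_of_dvd hp hXne hYne hdvd
        rw [nu_mul hp hUMne hVNne, e1, e2, e3] at hle
        have : a.toNat.factorization p = nu p a := by rw [nu, hanatAbs]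
        rw [this]
        omega
      · rw [show a.toNat.factorization p = nu p a by rw [nu, hanatAbs],
          nu_eq_zero_of_not_dvd hp ha0 hpa]
        omega
    · simp [Nat.factorization_eq_zero_of_not_prime _ hp]
  · intro hdvd
    rw [dvd_iff_nu hXne hYne]
    intro p hp
    by_cases hpa : (p:ℤ) ∣ a
    · obtain ⟨e1, e2, e3⟩ := expand p hp hpa
      rw [nu_mul hp hUMne hVNne, e1, e2, e3]
      have : nu p a ≤ t.factorization p := by
        have := (Nat.factorization_le_iff_dvd hta (by omega)).mpr hdvd
        rw [Finsupp.le_def] at this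
        have h2 := this p
        rwa [show a.toNat.factorization p = nu p a by rw [nu, hanatAbs]] at h2
      omega
    · exact hother p hp hpa

include hab ha hΔ hb hM2 hN2 hN1 hMN in
theorem core (hMpos : 2 ≤ M) (hUM : 2 ≤ U a b M) {k : ℕ} (hk : 1 ≤ k) :
    (U a b M * V a b N ∣ U a b k ↔ M * N * a.toNat ∣ k) := by
  have hatoNat1 : 1 ≤ a.toNat := by omega
  constructor
  · intro hdvd
    have hUdvd : U a b M ∣ U a b k := dvd_trans (Dvd.intro _ rfl) hdvd
    have hVdvd : V a b N ∣ U a b k := dvd_trans (Dvd.intro_left _ rfl) hdvd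
    have hMk : M ∣ k := index_dvd_of_U_dvd hab ha hΔ hb hUM (by omega) hUdvd
    have hNk : N ∣ k := by
      rcases Nat.lt_or_ge N 2 with h | h
      · have : N = 1 := by omega
        rw [this]; exact one_dvd k
      · have := two_mul_index_dvd_of_V_dvd hab ha hΔ hb h hk hVdvd
        exact dvd_trans ⟨2, by ring⟩ this
    have hMNk : M * N ∣ k := Nat.Coprime.mul_dvd_of_dvd_of_dvd hMN hMk hNk
    obtain ⟨t, rfl⟩ := hMNk
    have ht : 1 ≤ t := by
      rcases Nat.eq_zero_or_pos t with rfl | h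
      · simp at hk
      · exact h
    have := (key_lemma hab ha hΔ hb hM2 hN2 hN1 hMN hMpos ht).mp hdvd
    exact mul_dvd_mul_left (M*N) this
  · intro hdvd
    obtain ⟨s, rfl⟩ := hdvd
    have hs : 1 ≤ s := by
      rcases Nat.eq_zero_or_pos s with rfl | h
      · simp at hk
      · exact h
    have := (key_lemma hab ha hΔ hb hM2 hN2 hN1 hMN hMpos
      (t := a.toNat * s) (Nat.mul_pos (by omega) hs)).mpr ⟨s, rfl⟩
    rwa [show M*N*(a.toNat*s) = M*N*a.toNat*s by ring] at this

end Core

end Lucas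


namespace Lucas

lemma tau_eq {a b X : ℤ} {T : ℕ} (hT : 1 ≤ T) (hdvd : X ∣ U a b T)
    (hmin : ∀ k, 0 < k → X ∣ U a b k → T ∣ k) : tau a b X = T := by
  have hmem : T ∈ {k : ℕ | 0 < k ∧ X ∣ U a b k} := ⟨hT, hdvd⟩
  apply le_antisymm (Nat.sInf_le hmem)
  apply le_csInf ⟨T, hmem⟩
  rintro k ⟨hk, hXk⟩
  exact Nat.le_of_dvd hk (hmin k hk hXk)

/-! ### Natural number 2-adic lemmas -/

lemma two_mul_dvd_of_dvd_of_lt {x y : ℕ} (hxy : x ∣ y) (hy : y ≠ 0)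
    (h : x.factorization 2 < y.factorization 2) : 2*x ∣ y := by
  obtain ⟨c, rfl⟩ := hxy
  have hx : x ≠ 0 := by rintro rfl; simp at hy
  have hc : c ≠ 0 := by rintro rfl; simp at hy
  rcases Nat.even_or_odd c with he | ho
  · obtain ⟨c', rfl⟩ := he
    exact ⟨c', by ring⟩
  · exfalso
    rw [Nat.factorization_mul hx hc] at h
    have h0 : c.factorization 2 = 0 := Nat.factorization_eq_zero_of_not_dvd (by
      intro h2
      rw [Nat.odd_iff] at ho
      omega)
    simp only [Finsupp.coe_add, Pi.add_apply, h0, add_zero] at h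
    omega

lemma f2_lcm {m n : ℕ} (hm : m ≠ 0) (hn : n ≠ 0) :
    (Nat.lcm m n).factorization 2 = max (m.factorization 2) (n.factorization 2) := by
  rw [Nat.factorization_lcm hm hn]
  simp [Finsupp.sup_apply]

lemma f2_gcd {m n : ℕ} (hm : m ≠ 0) (hn : n ≠ 0) :
    (Nat.gcd m n).factorization 2 = min (m.factorization 2) (n.factorization 2) := by
  rw [Nat.factorization_gcd hm hn]
  simp [Finsupp.inf_apply]

lemma f2_le_of_dvd {x y : ℕ} (hx : x ≠ 0) (hy : y ≠ 0) (h : x ∣ y) :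
    x.factorization 2 ≤ y.factorization 2 := by
  have := (Nat.factorization_le_iff_dvd hx hy).mpr h
  exact Finsupp.le_def.mp this 2

lemma f2_two_mul {n : ℕ} (hn : n ≠ 0) : (2*n).factorization 2 = 1 + n.factorization 2 := by
  rw [Nat.factorization_mul (by norm_num) hn]
  simp [Nat.Prime.factorization_self Nat.prime_two]

lemma lcm_two_mul_eq {m n : ℕ} (hm : m ≠ 0) (hn : n ≠ 0)
    (h : m.factorization 2 ≤ n.factorization 2) :
    Nat.lcm m (2*n) = 2 * Nat.lcm m n := by
  have hL0 : Nat.lcm m n ≠ 0 := Nat.lcm_ne_zero hm hn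
  have hK0 : Nat.lcm m (2*n) ≠ 0 := Nat.lcm_ne_zero hm (by omega)
  apply Nat.dvd_antisymm
  · exact Nat.lcm_dvd ((Nat.dvd_lcm_left m n).mul_left 2)
      (mul_dvd_mul_left 2 (Nat.dvd_lcm_right m n))
  · have h1 : Nat.lcm m n ∣ Nat.lcm m (2*n) :=
      Nat.lcm_dvd (Nat.dvd_lcm_left _ _)
        (dvd_trans (dvd_mul_left n 2) (Nat.dvd_lcm_right _ _))
    apply two_mul_dvd_of_dvd_of_lt h1 hK0
    have h2 : (2*n).factorization 2 ≤ (Nat.lcm m (2*n)).factorization 2 :=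
      f2_le_of_dvd (by omega) hK0 (Nat.dvd_lcm_right _ _)
    rw [f2_two_mul hn] at h2
    rw [f2_lcm hm hn]
    omega

lemma exists_odd_lcm_div {m n : ℕ} (hm : m ≠ 0) (hn : n ≠ 0)
    (h : m.factorization 2 ≤ n.factorization 2) :
    ∃ j, Nat.lcm m n = n * (2*j+1) := by
  have hL0 : Nat.lcm m n ≠ 0 := Nat.lcm_ne_zero hm hn
  obtain ⟨c, hc⟩ : n ∣ Nat.lcm m n := Nat.dvd_lcm_right m n
  have hc0 : c ≠ 0 := by rintro rfl; simp [hc] at hL0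
  have hfL : (Nat.lcm m n).factorization 2 = n.factorization 2 := by
    rw [f2_lcm hm hn]; omega
  have hfc : c.factorization 2 = 0 := by
    rw [hc, Nat.factorization_mul hn hc0] at hfL
    simp only [Finsupp.coe_add, Pi.add_apply] at hfL
    omega
  have hodd : ¬ 2 ∣ c := by
    intro h2
    have := Nat.Prime.factorization_pos_of_dvd Nat.prime_two hc0 h2
    omega
  exact ⟨c/2, by rw [hc]; congr 1; omega⟩

lemma U_double (a b : ℤ) (L : ℕ) : U a b (2*L) = U a b L * V a b L := by
  have := U_shift a b L 0
  rw [zero_add] at this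
  rw [show 2*L = L+L by ring, this, U0, mul_zero, sub_zero]

end Lucas


open Lucas in
theorem tau_U_mul_V (a b : ℤ) (hab : IsCoprime a b) (ha : 0 < a)
    (hΔ : 0 < a ^ 2 + 4 * b) (hnd : Nondegenerate a b)
    (m n : ℕ) (hm : 3 ≤ m) (hn : 3 ≤ n) :
    (padicValNat 2 m ≤ padicValNat 2 n →
      tau a b (U a b m * V a b n) = 2 * Nat.lcm m n) ∧
    (padicValNat 2 n < padicValNat 2 m →
      (tau a b (U a b m * V a b n) : ℤ) = (Nat.lcm m n : ℤ) * V a b (Nat.gcd m n)) := by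
  obtain ⟨hb, -⟩ := hnd
  have hΔ' : 0 < a^2+4*b := hΔ
  have hm0 : m ≠ 0 := by omega
  have hn0 : n ≠ 0 := by omega
  have hL0 : Nat.lcm m n ≠ 0 := Nat.lcm_ne_zero hm0 hn0
  have hUm2 : 2 ≤ U a b m := U_ge_two ha hΔ' hb hm
  have hfm : m.factorization 2 = padicValNat 2 m := Nat.factorization_def m Nat.prime_two
  have hfn : n.factorization 2 = padicValNat 2 n := Nat.factorization_def n Nat.prime_two
  constructor
  · -- Case 1 : ν₂(m) ≤ ν₂(n), τ = 2 lcm(m,n)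
    intro hν
    have fν : m.factorization 2 ≤ n.factorization 2 := by rw [hfm, hfn]; exact hν
    apply tau_eq (by omega)
    · -- U m * V n ∣ U (2 * lcm m n)
      obtain ⟨j, hj⟩ := exists_odd_lcm_div hm0 hn0 fν
      have h1 : U a b m ∣ U a b (Nat.lcm m n) := U_dvd_U_of_dvd (Nat.dvd_lcm_left m n)
      have h2 : V a b n ∣ V a b (Nat.lcm m n) := by
        rw [hj]; exact V_dvd_V_odd_mul n j
      rw [U_double]
      exact mul_dvd_mul h1 h2
    · -- minimality
      intro k hk hX
      have hUdvd : U a b m ∣ U a b k := dvd_trans (Dvd.intro _ rfl) hX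
      have hVdvd : V a b n ∣ U a b k := dvd_trans (Dvd.intro_left _ rfl) hX
      have hmk : m ∣ k := index_dvd_of_U_dvd hab ha hΔ' hb hUm2 (by omega) hUdvd
      have h2nk : 2*n ∣ k := two_mul_index_dvd_of_V_dvd hab ha hΔ' hb (by omega) (by omega) hVdvd
      have : Nat.lcm m (2*n) ∣ k := Nat.lcm_dvd hmk h2nk
      rwa [lcm_two_mul_eq hm0 hn0 fν] at this
  · -- Case 2 : ν₂(n) < ν₂(m), τ = lcm(m,n) * V (gcd m n)
    intro hν
    have fν : n.factorization 2 < m.factorization 2 := by rw [hfm, hfn]; exact hν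
    have hd0 : Nat.gcd m n ≠ 0 := by
      intro h
      exact hm0 (Nat.eq_zero_of_gcd_eq_zero_left h)
    have hd1 : 1 ≤ Nat.gcd m n := by omega
    have hdm : Nat.gcd m n ∣ m := Nat.gcd_dvd_left m n
    have hdn : Nat.gcd m n ∣ n := Nat.gcd_dvd_right m n
    have hfd : (Nat.gcd m n).factorization 2 = n.factorization 2 := by
      rw [f2_gcd hm0 hn0]; omega
    set d := Nat.gcd m n with hddef
    set Mq := m / d with hMdef
    set Nq := n / d with hNdef
    have hmeq : m = d * Mq := (Nat.mul_div_cancel' hdm).symm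
    have hneq : n = d * Nq := (Nat.mul_div_cancel' hdn).symm
    have hMq0 : Mq ≠ 0 := by rintro h; rw [h, mul_zero] at hmeq; omega
    have hNq0 : Nq ≠ 0 := by rintro h; rw [h, mul_zero] at hneq; omega
    have hMN : Nat.Coprime Mq Nq := Nat.coprime_div_gcd_div_gcd (by omega)
    have h2M : 2 ∣ Mq := by
      have h2dm : 2*d ∣ m := two_mul_dvd_of_dvd_of_lt hdm hm0 (by omega)
      obtain ⟨c, hc⟩ := h2dm
      refine ⟨c, ?_⟩
      have : d * Mq = d * (2*c) := by rw [← hmeq, hc]; ring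
      exact Nat.eq_of_mul_eq_mul_left (by omega) this
    have hN2 : ¬ 2 ∣ Nq := by
      intro h2
      obtain ⟨c, hc⟩ := h2
      have h2dn : 2*d ∣ n := ⟨c, by rw [hneq, hc]; ring⟩
      have := f2_le_of_dvd (by omega) hn0 h2dn
      rw [f2_two_mul hd0] at this
      omega
    have hMq2 : 2 ≤ Mq := by
      rcases h2M with ⟨c, hc⟩
      omega
    -- new parameters
    have hA : 0 < V a b d := V_pos ha hΔ' d
    have hAd : (V a b d).toNat = V a b d ∨ True := Or.inr trivial
    have habA : IsCoprime (V a b d) (-(-b)^d) := by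
      have h := V_coprime_b a b hab (d-1)
      rw [show d-1+1 = d by omega] at h
      exact (h.neg_right.pow_right (n := d)).neg_right
    have hUdpos : 0 < U a b d := U_pos ha hΔ' hd1
    have hΔA : 0 < (V a b d)^2 + 4*(-(-b)^d) := by
      have h1 := VV_sub_UU a b d
      have h2 : (V a b d)^2 + 4*(-(-b)^d) = (a^2+4*b) * U a b d^2 := by linarith
      rw [h2]
      positivity
    have hbB : (-(-b)^d) ≠ 0 := by
      simp only [ne_eq, neg_eq_zero, pow_eq_zero_iff hd0]
      omega
    have hUM' : 2 ≤ U (V a b d) (-(-b)^d) Mq := by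
      rcases Nat.lt_or_ge Mq 3 with hM3 | hM3
      · have hMq2' : Mq = 2 := by omega
        have hd2 : 2 ≤ d := by nlinarith [hmeq, hMq2']
        rw [hMq2', U2]
        exact le_trans (by norm_num) (V_ge_three ha hΔ' hb hd2)
      · exact U_ge_two hA hΔA hbB hM3
    have hUdne : U a b d ≠ 0 := ne_of_gt hUdpos
    have hcomp : ∀ j, U a b (d*j) = U a b d * U (V a b d) (-(-b)^d) j := U_comp a b d
    have hVcompN : V a b n = V (V a b d) (-(-b)^d) Nq := by
      rw [hneq]; exact V_comp a b d Nq
    have hUcompM : U a b m = U a b d * U (V a b d) (-(-b)^d) Mq := by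
      rw [hmeq]; exact hcomp Mq
    have hAt1 : 1 ≤ (V a b d).toNat := by omega
    have main : ∀ k, 0 < k →
        (U a b m * V a b n ∣ U a b k ↔ d*(Mq*Nq*(V a b d).toNat) ∣ k) := by
      intro k hk
      constructor
      · intro hdvd
        have hmk : m ∣ k := index_dvd_of_U_dvd hab ha hΔ' hb hUm2 (by omega)
          (dvd_trans (Dvd.intro _ rfl) hdvd)
        obtain ⟨j, rfl⟩ := dvd_trans hdm hmk
        have hj : 1 ≤ j := by
          rcases Nat.eq_zero_or_pos j with rfl | h
          · simp at hk
          · exact h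
        have hXj : U (V a b d) (-(-b)^d) Mq * V (V a b d) (-(-b)^d) Nq
            ∣ U (V a b d) (-(-b)^d) j := by
          rw [hUcompM, hVcompN, hcomp j, mul_assoc] at hdvd
          exact (mul_dvd_mul_iff_left hUdne).mp hdvd
        have := (core habA hA hΔA hbB h2M hN2 (Nat.one_le_iff_ne_zero.mpr hNq0) hMN hMq2 hUM' hj).mp hXj
        exact mul_dvd_mul_left d this
      · intro hdvd
        obtain ⟨j, rfl⟩ := dvd_trans (Dvd.intro _ rfl) hdvd
        have hMNAj : Mq*Nq*(V a b d).toNat ∣ j :=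
          (Nat.mul_dvd_mul_iff_left (show 0 < d by omega)).mp hdvd
        have hj : 1 ≤ j := by
          rcases Nat.eq_zero_or_pos j with rfl | h
          · simp at hk
          · exact h
        have := (core habA hA hΔA hbB h2M hN2 (Nat.one_le_iff_ne_zero.mpr hNq0) hMN hMq2 hUM' hj).mpr hMNAj
        rw [hUcompM, hVcompN, hcomp j, mul_assoc]
        exact mul_dvd_mul_left (U a b d) this
    have hTpos : 0 < d*(Mq*Nq*(V a b d).toNat) := by
      have h1 : 0 < d := Nat.pos_of_ne_zero hd0
      have h2 : 0 < Mq := Nat.pos_of_ne_zero hMq0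
      have h3 : 0 < Nq := Nat.pos_of_ne_zero hNq0
      exact Nat.mul_pos h1 (Nat.mul_pos (Nat.mul_pos h2 h3) hAt1)
    have htau : tau a b (U a b m * V a b n) = d*(Mq*Nq*(V a b d).toNat) :=
      tau_eq hTpos ((main _ hTpos).mpr dvd_rfl) (fun k hk hX => (main k hk).mp hX)
    rw [htau]
    have hlcm : Nat.lcm m n = d * (Mq*Nq) := by
      have h1 : d * Nat.lcm m n = m * n := Nat.gcd_mul_lcm m n
      have h2 : d * Nat.lcm m n = d * (d * (Mq*Nq)) := by
        rw [h1, hmeq, hneq]; ring_nf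
      exact Nat.eq_of_mul_eq_mul_left (by omega) h2
    rw [hlcm]
    push_cast [Int.toNat_of_nonneg (le_of_lt hA)]
    ring
end

section
/- Let m, n ≥ 3 be integers and d = gcd(m, n). Then τ(U_m · U_n) = [m, n] · U_d. -/
namespace LucasWork

variable {a b : ℤ}

lemma U_zero : U a b 0 = 0 := rfl
lemma U_one : U a b 1 = 1 := rfl
lemma U_two : U a b 2 = a := by show a * 1 + b * 0 = a; ring
lemma U_rec (k : ℕ) : U a b (k + 2) = a * U a b (k + 1) + b * U a b k := rfl

/-- Addition formula. -/
lemma U_add (a b : ℤ) (x y : ℕ) :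
    U a b (x + y + 1) = U a b (x + 1) * U a b (y + 1) + b * U a b x * U a b y := by
  induction x using Nat.twoStepInduction with
  | zero => simp [U_zero, U_one]
  | one =>
    have : (1 : ℕ) + y + 1 = y + 2 := by ring
    rw [this, U_rec, U_one, U_two]; ring
  | more x ih1 ih2 =>
    rw [show x + 2 + y + 1 = (x + y + 1) + 2 from by ring, U_rec,
      show x + y + 1 + 1 = x + 1 + y + 1 from by ring, ih1, ih2,
      show x + 2 + 1 = x + 1 + 2 from by ring, U_rec (x+1), U_rec x]
    ring

lemma coprime_U_b (hab : IsCoprime a b) (k : ℕ) : IsCoprime (U a b (k + 1)) b := by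
  induction k using Nat.twoStepInduction with
  | zero => simpa [U_one] using isCoprime_one_left
  | one => simpa [U_two] using hab
  | more k ih1 ih2 =>
    rw [U_rec]
    have h1 : IsCoprime (a * U a b (k + 1 + 1)) b := hab.mul_left ih2
    simpa [mul_comm] using h1.add_mul_right_left (U a b (k + 1))

lemma coprime_succ (hab : IsCoprime a b) : ∀ k, IsCoprime (U a b (k + 1)) (U a b k)
  | 0 => by simpa [U_zero, U_one] using isCoprime_one_left
  | (k + 1) => by
    rw [U_rec]
    have h : IsCoprime (b * U a b k) (U a b (k + 1)) :=
      ((coprime_U_b hab k).symm).mul_left (coprime_succ hab k).symm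
    have h2 := h.add_mul_right_left a
    have e : a * U a b (k + 1) + b * U a b k = b * U a b k + a * U a b (k + 1) := by ring
    rw [e]; exact h2

lemma U_dvd_U_mul (m : ℕ) : ∀ k, U a b m ∣ U a b (k * m)
  | 0 => by simp [U_zero]
  | (k + 1) => by
    rcases m with _ | j
    · simp [U_zero]
    · rw [show (k + 1) * (j + 1) = j + k * (j + 1) + 1 from by ring, U_add]
      exact dvd_add (dvd_mul_right _ _) ((U_dvd_U_mul (j + 1) k).mul_left _)

lemma U_dvd_U {m n : ℕ} (h : m ∣ n) : U a b m ∣ U a b n := by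
  obtain ⟨k, rfl⟩ := h
  rw [mul_comm]
  exact U_dvd_U_mul m k

lemma gcd_helper1 (x y z : ℤ) : Int.gcd x (y + x * z) = Int.gcd x y := by
  apply Nat.dvd_antisymm
  · rw [← Int.natCast_dvd_natCast]
    have h1 : (↑(Int.gcd x (y + x * z)) : ℤ) ∣ x := Int.gcd_dvd_left _ _
    have h2 : (↑(Int.gcd x (y + x * z)) : ℤ) ∣ y + x * z := Int.gcd_dvd_right _ _
    have h3 : (↑(Int.gcd x (y + x * z)) : ℤ) ∣ y := by
      have := h2.sub (h1.mul_right z); simpa using this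
    exact Int.dvd_coe_gcd h1 h3
  · rw [← Int.natCast_dvd_natCast]
    have h1 : (↑(Int.gcd x y) : ℤ) ∣ x := Int.gcd_dvd_left _ _
    have h2 : (↑(Int.gcd x y) : ℤ) ∣ y := Int.gcd_dvd_right _ _
    exact Int.dvd_coe_gcd h1 (h2.add (h1.mul_right z))

lemma gcd_helper2 {x z : ℤ} (y : ℤ) (h : IsCoprime x z) : Int.gcd x (y * z) = Int.gcd x y := by
  have hz : Nat.Coprime z.natAbs x.natAbs := Int.isCoprime_iff_gcd_eq_one.mp h.symm
  show Nat.gcd _ _ = Nat.gcd _ _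
  rw [Int.natAbs_mul]
  exact Nat.Coprime.gcd_mul_right_cancel_right _ hz

lemma gcd_U_add_self (hab : IsCoprime a b) (m r : ℕ) :
    Int.gcd (U a b m) (U a b (r + m)) = Int.gcd (U a b m) (U a b r) := by
  rcases r with _ | j
  · simp [U_zero, Int.gcd_zero_right]
  · calc Int.gcd (U a b m) (U a b (j + 1 + m))
        = Int.gcd (U a b m) (U a b (j + 1) * U a b (m + 1) + U a b m * (b * U a b j)) := by
          rw [show j + 1 + m = j + m + 1 from by ring, U_add]; ring_nf
      _ = Int.gcd (U a b m) (U a b (j + 1) * U a b (m + 1)) := gcd_helper1 _ _ _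
      _ = Int.gcd (U a b m) (U a b (j + 1)) := gcd_helper2 _ (coprime_succ hab m).symm

lemma gcd_U_add_mul_self (hab : IsCoprime a b) (m r : ℕ) :
    ∀ k, Int.gcd (U a b m) (U a b (r + k * m)) = Int.gcd (U a b m) (U a b r)
  | 0 => by simp
  | (k + 1) => by
    rw [show r + (k + 1) * m = (r + k * m) + m from by ring, gcd_U_add_self hab,
      gcd_U_add_mul_self hab m r k]

lemma gcd_U (hab : IsCoprime a b) (m n : ℕ) :
    Int.gcd (U a b m) (U a b n) = (U a b (Nat.gcd m n)).natAbs := by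
  induction m, n using Nat.gcd.induction with
  | H0 n => simp [U_zero]
  | H1 m n hm ih =>
    conv_lhs => rw [← Nat.mod_add_div' n m]
    rw [gcd_U_add_mul_self hab m (n % m) (n / m), Int.gcd_comm, ih, ← Nat.gcd_rec]

lemma dvd_U_gcd (hab : IsCoprime a b) {c : ℤ} {m n : ℕ} (h1 : c ∣ U a b m)
    (h2 : c ∣ U a b n) : c ∣ U a b (Nat.gcd m n) := by
  have := Int.dvd_coe_gcd h1 h2
  rw [gcd_U hab] at this
  exact Int.dvd_natAbs.mp this

/-- `U (k*n+1) ≡ U (n+1) ^ k  (mod U n)` -/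
lemma C1 (a b : ℤ) (n : ℕ) : ∀ k : ℕ, ∃ r : ℤ,
    U a b (k * n + 1) = (U a b (n + 1)) ^ k + r * U a b n
  | 0 => ⟨0, by simp [U_one]⟩
  | (k + 1) => by
    obtain ⟨r, hr⟩ := C1 a b n k
    refine ⟨r * U a b (n + 1) + b * U a b (k * n), ?_⟩
    rw [show (k + 1) * n + 1 = k * n + n + 1 from by ring, U_add, hr]
    ring

/-- `U ((k+1)*n) ≡ (k+1) * U n * U (n+1) ^ k  (mod (U n)^2)` -/
lemma C2 (a b : ℤ) (n : ℕ) : ∀ k : ℕ, ∃ t : ℤ,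
    U a b ((k + 1) * n) = ((k + 1 : ℕ) : ℤ) * U a b n * (U a b (n + 1)) ^ k + t * (U a b n) ^ 2
  | 0 => ⟨0, by simp⟩
  | (k + 1) => by
    rcases n with _ | j
    · exact ⟨0, by simp [U_zero]⟩
    obtain ⟨t, ht⟩ := C2 a b (j + 1) k
    obtain ⟨r, hr⟩ := C1 a b (j + 1) (k + 1)
    have hpos : 0 < (k + 1) * (j + 1) := by positivity
    obtain ⟨p, hp⟩ : ∃ p, (k + 1) * (j + 1) = p + 1 :=
      ⟨(k + 1) * (j + 1) - 1, by omega⟩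
    rw [hp] at ht hr
    refine ⟨t * U a b (j + 2) + r - a * ((k + 1 : ℕ) : ℤ) * (U a b (j + 2)) ^ k
      - a * t * U a b (j + 1), ?_⟩
    rw [show (k + 1 + 1) * (j + 1) = p + (j + 1) + 1 from by
        rw [show (k + 1 + 1) * (j + 1) = (k + 1) * (j + 1) + (j + 1) from by ring, hp]; ring,
      U_add]
    have hb : b * U a b p = U a b (p + 2) - a * U a b (p + 1) := by rw [U_rec]; ring
    rw [show j + 1 + 1 = j + 2 from rfl] at *
    rw [show b * U a b p * U a b (j + 1) = (b * U a b p) * U a b (j + 1) from rfl, hb,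
      show p + 1 + 1 = p + 2 from rfl] at *
    rw [hr, ht]
    push_cast
    ring

lemma U_pos_of_bpos (ha : 0 < a) (hbp : 0 < b) : ∀ k, 0 < U a b (k + 1) := by
  intro k; induction k using Nat.twoStepInduction with
  | zero => simp [U_one]
  | one => simpa [U_two] using ha
  | more k ih1 ih2 =>
    show 0 < U a b (k + 1 + 2)
    rw [U_rec]; nlinarith

lemma facts_bneg (ha : 0 < a) (hΔ : 0 < a ^ 2 + 4 * b) (hbn : b < 0) : ∀ k,
    0 < U a b (k + 1) ∧ a * U a b (k + 1) ≤ 2 * U a b (k + 2) ∧ U a b (k + 1) < U a b (k + 2) := by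
  have ha3 : 3 ≤ a := by nlinarith
  intro k; induction k with
  | zero =>
    refine ⟨by simp [U_one], ?_, ?_⟩
    · rw [U_one, U_two]; linarith
    · rw [U_one, U_two]; linarith
  | succ k ih =>
    obtain ⟨h1, h2, h3⟩ := ih
    have h1' : 0 < U a b (k + 2) := lt_trans h1 h3
    refine ⟨h1', ?_, ?_⟩
    · show a * U a b (k + 2) ≤ 2 * U a b (k + 1 + 2)
      rw [U_rec (k + 1)]
      nlinarith [mul_le_mul_of_nonneg_left h2 ha.le, mul_pos hΔ h1]
    · show U a b (k + 2) < U a b (k + 1 + 2)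
      rw [U_rec (k + 1)]
      have key : 2 ≤ a ^ 2 - a + 2 * b := by nlinarith [sq_nonneg (a - 1)]
      have key2 : (a ^ 2 - a + 2 * b) * U a b (k + 2)
          ≤ a * ((a - 1) * U a b (k + 2) + b * U a b (k + 1)) := by
        nlinarith [mul_nonneg (by linarith : (0:ℤ) ≤ -b)
          (by linarith : 0 ≤ 2 * U a b (k + 2) - a * U a b (k + 1))]
      have key3 : 0 < (a - 1) * U a b (k + 2) + b * U a b (k + 1) := by
        by_contra h; push_neg at h
        nlinarith [mul_le_mul_of_nonneg_right key h1'.le, mul_nonneg ha.le (neg_nonneg.mpr h)]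
      linarith [key3]

lemma U_pos (ha : 0 < a) (hΔ : 0 < a ^ 2 + 4 * b) (hb : b ≠ 0) (k : ℕ) :
    0 < U a b (k + 1) := by
  rcases hb.lt_or_gt with h | h
  · exact (facts_bneg ha hΔ h k).1
  · exact U_pos_of_bpos ha h k

lemma U_mono (ha : 0 < a) (hΔ : 0 < a ^ 2 + 4 * b) (hb : b ≠ 0) :
    ∀ k, U a b k ≤ U a b (k + 1) := by
  intro k
  rcases hb.lt_or_gt with h | h
  · rcases k with _ | j
    · simp [U_zero, U_one]
    · exact (facts_bneg ha hΔ h j).2.2.le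
  · rcases k with _ | _ | j
    · simp [U_zero, U_one]
    · rw [U_one, U_two]; linarith
    · show U a b (j + 2) ≤ U a b (j + 1 + 2)
      rw [U_rec (j + 1)]
      nlinarith [U_pos_of_bpos ha h j, U_pos_of_bpos ha h (j + 1)]

lemma U_strict2 (ha : 0 < a) (hΔ : 0 < a ^ 2 + 4 * b) (hb : b ≠ 0) (k : ℕ) :
    U a b (k + 2) < U a b (k + 3) := by
  rcases hb.lt_or_gt with h | h
  · exact (facts_bneg ha hΔ h (k + 1)).2.2
  · show U a b (k + 2) < U a b (k + 1 + 2)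
    rw [U_rec (k + 1)]
    nlinarith [U_pos_of_bpos ha h k, U_pos_of_bpos ha h (k + 1)]

lemma U_le (ha : 0 < a) (hΔ : 0 < a ^ 2 + 4 * b) (hb : b ≠ 0) {j k : ℕ} (h : j ≤ k) :
    U a b j ≤ U a b k :=
  monotone_nat_of_le_succ (U_mono ha hΔ hb) h

lemma U_lt (ha : 0 < a) (hΔ : 0 < a ^ 2 + 4 * b) (hb : b ≠ 0) {j m : ℕ} (hjm : j < m)
    (hm : 3 ≤ m) : U a b j < U a b m := by
  obtain ⟨q, rfl⟩ : ∃ q, m = q + 3 := ⟨m - 3, by omega⟩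
  exact lt_of_le_of_lt (U_le ha hΔ hb (by omega : j ≤ q + 2)) (U_strict2 ha hΔ hb q)

noncomputable def tau' (a b : ℤ) (m : ℤ) : ℕ :=
  sInf {k : ℕ | 0 < k ∧ m ∣ U a b k}

lemma tau'_mem {N : ℤ} (hex : ∃ k, 0 < k ∧ N ∣ U a b k) :
    0 < tau' a b N ∧ N ∣ U a b (tau' a b N) :=
  Nat.sInf_mem hex

lemma tau'_dvd (hab : IsCoprime a b) {N : ℤ} (hex : ∃ k, 0 < k ∧ N ∣ U a b k)
    {k : ℕ} (hk : 0 < k) (h : N ∣ U a b k) : tau' a b N ∣ k := by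
  obtain ⟨htpos, htdvd⟩ := tau'_mem hex
  set t := tau' a b N
  have hgS : 0 < Nat.gcd t k ∧ N ∣ U a b (Nat.gcd t k) :=
    ⟨Nat.gcd_pos_of_pos_right _ hk, dvd_U_gcd hab htdvd h⟩
  have h1 : t ≤ Nat.gcd t k := Nat.sInf_le hgS
  have h2 : Nat.gcd t k ≤ t := Nat.le_of_dvd htpos (Nat.gcd_dvd_left _ _)
  have : Nat.gcd t k = t := le_antisymm h2 h1
  rw [← this]
  exact Nat.gcd_dvd_right _ _

lemma pow_dvd_U_mul_pow {p r : ℕ} (hr : 0 < r) (hp1 : 0 < p)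
    (hpU : (p : ℤ) ∣ U a b r) : ∀ i, ((p : ℤ)) ^ (i + 1) ∣ U a b (r * p ^ i)
  | 0 => by simpa using hpU
  | (i + 1) => by
    have ih := pow_dvd_U_mul_pow hr hp1 hpU i
    set N := r * p ^ i with hN
    have hN1 : 0 < N := by positivity
    obtain ⟨t, ht⟩ := C2 a b N (p - 1)
    rw [show p - 1 + 1 = p from by omega] at ht
    have hidx : r * p ^ (i + 1) = p * N := by rw [hN]; ring
    rw [hidx, ht]
    apply dvd_add
    · have h1 : ((p : ℤ)) ^ (i + 2) ∣ (p : ℤ) * U a b N := by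
        have h2 := mul_dvd_mul_left (p : ℤ) ih
        have h3 : ((p : ℤ)) ^ (i + 2) = (p : ℤ) * (p : ℤ) ^ (i + 1) := by ring
        rwa [← h3] at h2
      exact h1.mul_right _
    · calc ((p : ℤ)) ^ (i + 2) ∣ ((p : ℤ) ^ (i + 1)) ^ 2 := by
            rw [← pow_mul]; exact pow_dvd_pow _ (by omega)
        _ ∣ (U a b N) ^ 2 := pow_dvd_pow_of_dvd ih 2
        _ ∣ t * (U a b N) ^ 2 := dvd_mul_left _ _

end LucasWork


open LucasWork in
theorem tau_U_mul_U (a b : ℤ) (hab : IsCoprime a b) (ha : 0 < a)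
    (hΔ : 0 < a ^ 2 + 4 * b) (hnd : Nondegenerate a b)
    (m n : ℕ) (hm : 3 ≤ m) (hn : 3 ≤ n) :
    (tau a b (U a b m * U a b n) : ℤ) = (Nat.lcm m n : ℤ) * U a b (Nat.gcd m n) := by
  have hb : b ≠ 0 := hnd.1
  set d := Nat.gcd m n with hd
  set L := Nat.lcm m n with hL
  have hm0 : m ≠ 0 := by omega
  have hn0 : n ≠ 0 := by omega
  have hdpos : 0 < d := Nat.gcd_pos_of_pos_left _ (by omega)
  have hL0 : L ≠ 0 := Nat.lcm_ne_zero hm0 hn0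
  have hLpos : 0 < L := Nat.pos_of_ne_zero hL0
  have hmL : m ∣ L := Nat.dvd_lcm_left m n
  have hnL : n ∣ L := Nat.dvd_lcm_right m n
  have Upos : ∀ {k : ℕ}, 0 < k → 0 < U a b k := by
    intro k hk
    obtain ⟨j, rfl⟩ : ∃ j, k = j + 1 := ⟨k - 1, by omega⟩
    exact U_pos ha hΔ hb j
  set D := U a b d with hD
  have hDpos : 0 < D := Upos hdpos
  have hD0 : D ≠ 0 := hDpos.ne'
  obtain ⟨A, hA⟩ : D ∣ U a b m := U_dvd_U (Nat.gcd_dvd_left m n)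
  obtain ⟨B, hB⟩ : D ∣ U a b n := U_dvd_U (Nat.gcd_dvd_right m n)
  have hUmpos : 0 < U a b m := Upos (by omega)
  have hUnpos : 0 < U a b n := Upos (by omega)
  have hULpos : 0 < U a b L := Upos hLpos
  have hApos : 0 < A := by
    have h1 : 0 < D * A := by rw [← hA]; exact hUmpos
    exact (mul_pos_iff_of_pos_left hDpos).mp h1
  have hBpos : 0 < B := by
    have h1 : 0 < D * B := by rw [← hB]; exact hUnpos
    exact (mul_pos_iff_of_pos_left hDpos).mp h1
  have hAB : IsCoprime A B := by
    have hg := gcd_U hab m n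
    rw [hA, hB, Int.gcd_mul_left, ← hd, ← hD] at hg
    have hne : D.natAbs ≠ 0 := Int.natAbs_ne_zero.mpr hD0
    rw [Int.isCoprime_iff_gcd_eq_one]
    exact mul_left_cancel₀ hne (by rw [hg, mul_one])
  obtain ⟨E, hE⟩ : U a b m ∣ U a b L := U_dvd_U hmL
  have hBE : B ∣ E := by
    have h1 : D * B ∣ U a b L := by rw [← hB]; exact U_dvd_U hnL
    rw [hE, hA, mul_assoc] at h1
    have h2 : B ∣ A * E := (mul_dvd_mul_iff_left hD0).mp h1
    exact (hAB.symm).dvd_of_dvd_mul_left h2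
  obtain ⟨H, hH⟩ := hBE
  have hUL : U a b L = D * A * (B * H) := by rw [hE, hA, hH]
  have hDUL : D ∣ U a b L := ⟨A * (B * H), by rw [hUL]; ring⟩
  have hcopDu : IsCoprime D (U a b (L + 1)) := by
    have h1 : IsCoprime (U a b (L + 1)) (U a b L) := coprime_succ hab L
    exact (h1.of_isCoprime_of_dvd_right hDUL).symm
  -- ==== Lemma E : IsCoprime D H ====
  have hcopDH : IsCoprime D H := by
    rw [Int.isCoprime_iff_gcd_eq_one]
    by_contra hne
    have hp : (Int.gcd D H).minFac.Prime := Nat.minFac_prime hne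
    set p := (Int.gcd D H).minFac with hpdef
    have hpD : (p : ℤ) ∣ D :=
      dvd_trans (Int.natCast_dvd_natCast.mpr (Nat.minFac_dvd _)) (Int.gcd_dvd_left _ _)
    have hpH : (p : ℤ) ∣ H :=
      dvd_trans (Int.natCast_dvd_natCast.mpr (Nat.minFac_dvd _)) (Int.gcd_dvd_right _ _)
    have hpUL : (p : ℤ) ∣ U a b L := hpD.trans hDUL
    set x := (U a b L).natAbs with hx
    have hx0 : x ≠ 0 := Int.natAbs_ne_zero.mpr hULpos.ne'
    set j := x.factorization p with hj
    have hpx : p ∣ x := by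
      have h1 := Int.natAbs_dvd_natAbs.mpr hpUL
      simpa using h1
    have hj1 : 1 ≤ j := hp.factorization_pos_of_dvd hx0 hpx
    have hpjUL : ((p : ℤ)) ^ j ∣ U a b L := by
      have h1 : (p : ℕ) ^ j ∣ x := Nat.ordProj_dvd x p
      have h2 : ((p ^ j : ℕ) : ℤ) ∣ U a b L := Int.dvd_natAbs.mp (Int.natCast_dvd_natCast.mpr h1)
      push_cast at h2; exact h2
    have hpj1 : ¬ (p : ℕ) ^ (j + 1) ∣ x := Nat.pow_succ_factorization_not_dvd hx0 hp
    have hex1 : ∃ k, 0 < k ∧ (p : ℤ) ∣ U a b k := ⟨d, hdpos, hpD⟩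
    obtain ⟨ht1pos, ht1dvd⟩ := tau'_mem hex1
    have ht1d : tau' a b (p : ℤ) ∣ d := tau'_dvd hab hex1 hdpos hpD
    set t1 := tau' a b (p : ℤ) with ht1def
    have hexj : ∃ k, 0 < k ∧ ((p : ℤ)) ^ j ∣ U a b k := ⟨L, hLpos, hpjUL⟩
    obtain ⟨htjpos, htjdvd⟩ := tau'_mem hexj
    have htjL : tau' a b ((p : ℤ) ^ j) ∣ L := tau'_dvd hab hexj hLpos hpjUL
    set tj := tau' a b ((p : ℤ) ^ j) with htjdef
    have ht1tj : t1 ∣ tj :=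
      tau'_dvd hab hex1 htjpos ((dvd_pow_self (p : ℤ) (by omega : j ≠ 0)).trans htjdvd)
    have hstep : ((p : ℤ)) ^ (j - 1 + 1) ∣ U a b (t1 * p ^ (j - 1)) :=
      pow_dvd_U_mul_pow ht1pos hp.pos ht1dvd (j - 1)
    rw [show j - 1 + 1 = j from by omega] at hstep
    have htjdvd2 : tj ∣ t1 * p ^ (j - 1) :=
      tau'_dvd hab hexj (Nat.mul_pos ht1pos (pow_pos hp.pos _)) hstep
    obtain ⟨e, he⟩ := ht1tj
    have hedvd : e ∣ p ^ (j - 1) := by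
      rw [he] at htjdvd2
      exact (Nat.mul_dvd_mul_iff_left ht1pos).mp htjdvd2
    obtain ⟨i, hile, hei⟩ := (Nat.dvd_prime_pow hp).mp hedvd
    rw [hei] at he
    set ν := t1.factorization p with hν
    have ht10 : t1 ≠ 0 := ht1pos.ne'
    have hppow_tj : p ^ (i + ν) ∣ tj := by
      rw [he]
      calc p ^ (i + ν) = p ^ ν * p ^ i := by ring
        _ ∣ t1 * p ^ i := mul_dvd_mul (Nat.ordProj_dvd t1 p) dvd_rfl
    have hiν : i + ν ≤ L.factorization p :=
      (hp.pow_dvd_iff_le_factorization hL0).mp (hppow_tj.trans htjL)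
    have hLfac : L.factorization p = max (m.factorization p) (n.factorization p) := by
      rw [hL, Nat.factorization_lcm hm0 hn0, Finsupp.sup_apply]
    have key : ∀ (m' : ℕ) (Z : ℤ), m' ≠ 0 → d ∣ m' →
        L.factorization p = m'.factorization p → U a b L = U a b m' * Z →
        (p : ℤ) ∣ Z → False := by
      intro m' Z hm'0 hdm' hfac hULZ hpZ
      obtain ⟨q, hq, hq2⟩ : ∃ q, t1 = p ^ ν * q ∧ ¬ p ∣ q :=
        ⟨ordCompl[p] t1, (Nat.ordProj_mul_ordCompl_eq_self t1 p).symm,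
          Nat.not_dvd_ordCompl hp ht10⟩
      have hqt1 : q ∣ t1 := by rw [hq]; exact dvd_mul_left q (p ^ ν)
      have hτ'm : q ∣ m' := hqt1.trans (ht1d.trans hdm')
      have hpν : p ^ (i + ν) ∣ m' := by
        have h1 : i + ν ≤ m'.factorization p := by rw [← hfac]; exact hiν
        exact (hp.pow_dvd_iff_le_factorization hm'0).mpr h1
      have hcop : Nat.Coprime (p ^ (i + ν)) q :=
        Nat.Coprime.pow_left _ ((hp.coprime_iff_not_dvd).mpr hq2)
      have htjm' : tj ∣ m' := by
        have h1 : tj = p ^ (i + ν) * q := by rw [he, hq]; ring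
        rw [h1]
        exact hcop.mul_dvd_of_dvd_of_dvd hpν hτ'm
      have hpjm' : ((p : ℤ)) ^ j ∣ U a b m' := htjdvd.trans (U_dvd_U htjm')
      have hfin : ((p : ℤ)) ^ (j + 1) ∣ U a b L := by
        rw [hULZ, pow_succ]
        exact mul_dvd_mul hpjm' hpZ
      apply hpj1
      have h2 : ((p ^ (j + 1) : ℕ) : ℤ) ∣ U a b L := by push_cast; exact hfin
      exact Int.natCast_dvd_natCast.mp (Int.dvd_natAbs.mpr h2)
    rcases le_total (n.factorization p) (m.factorization p) with hcase | hcase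
    · exact key m (B * H) hm0 (Nat.gcd_dvd_left m n)
        (by rw [hLfac, max_eq_left hcase]) (by rw [hUL, hA]) (hpH.mul_left B)
    · exact key n (A * H) hn0 (Nat.gcd_dvd_right m n)
        (by rw [hLfac, max_eq_right hcase]) (by rw [hUL, hB]; ring) (hpH.mul_left A)
  -- ==== upper bound ====
  have hcD : ((D.toNat : ℤ)) = D := Int.toNat_of_nonneg hDpos.le
  set c := D.toNat with hc
  have hcpos : 0 < c := by
    have := hDpos
    rw [← hcD] at this
    exact_mod_cast this
  obtain ⟨t, ht⟩ := C2 a b L (c - 1)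
  rw [show c - 1 + 1 = c from by omega] at ht
  have hPK : U a b m * U a b n ∣ U a b (c * L) := by
    refine ⟨H * (U a b (L + 1)) ^ (c - 1) + t * (A * B * H ^ 2), ?_⟩
    rw [ht, hUL, hcD, hA, hB]; ring
  have hex0 : ∃ k, 0 < k ∧ U a b m * U a b n ∣ U a b k := ⟨c * L, by positivity, hPK⟩
  -- ==== lower bound / uniqueness ====
  have hkey : ∀ t0 : ℕ, 0 < t0 → (U a b m * U a b n) ∣ U a b t0 → t0 ∣ c * L → t0 = L * c := by
    intro t0 ht0pos ht0dvd ht0K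
    have hmdvd : ∀ m'' : ℕ, 3 ≤ m'' → U a b m'' ∣ U a b t0 → m'' ∣ t0 := by
      intro m'' hm'' hdvdU
      have hg : U a b m'' ∣ U a b (Nat.gcd m'' t0) := dvd_U_gcd hab dvd_rfl hdvdU
      have hgle : Nat.gcd m'' t0 = m'' := by
        by_contra hgne
        have hlt : Nat.gcd m'' t0 < m'' :=
          lt_of_le_of_ne (Nat.le_of_dvd (by omega) (Nat.gcd_dvd_left _ _)) hgne
        have h1 : 0 < U a b (Nat.gcd m'' t0) := Upos (Nat.gcd_pos_of_pos_right _ ht0pos)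
        have h2 := Int.le_of_dvd h1 hg
        have h3 := U_lt ha hΔ hb hlt hm''
        linarith
      rw [← hgle]; exact Nat.gcd_dvd_right _ _
    have hmt0 : m ∣ t0 := hmdvd m hm ((dvd_mul_right _ _).trans ht0dvd)
    have hnt0 : n ∣ t0 := hmdvd n hn ((dvd_mul_left _ _).trans ht0dvd)
    have hLt0 : L ∣ t0 := Nat.lcm_dvd hmt0 hnt0
    obtain ⟨s, hs⟩ := hLt0
    have hspos : 0 < s := by
      by_contra hcon
      have : s = 0 := by omega
      rw [this, Nat.mul_zero] at hs
      omega
    obtain ⟨w, hw⟩ := C2 a b L (s - 1)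
    rw [show s - 1 + 1 = s from by omega] at hw
    have hPdvd : U a b m * U a b n ∣ U a b (s * L) := by
      rw [Nat.mul_comm s L, ← hs]; exact ht0dvd
    have hDABne : D * A * B ≠ 0 := (mul_pos (mul_pos hDpos hApos) hBpos).ne'
    have hDdvd : D ∣ (s : ℤ) * (H * (U a b (L + 1)) ^ (s - 1)) + w * (D * A * B * H ^ 2) := by
      have h1 : (D * A * B) * D ∣
          (D * A * B) * ((s : ℤ) * (H * (U a b (L + 1)) ^ (s - 1)) + w * (D * A * B * H ^ 2)) := by
        have he1 : (D * A * B) * ((s : ℤ) * (H * (U a b (L + 1)) ^ (s - 1))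
            + w * (D * A * B * H ^ 2)) = U a b (s * L) := by
          rw [hw, hUL]; ring
        have he2 : (D * A * B) * D = U a b m * U a b n := by rw [hA, hB]; ring
        rw [he1, he2]; exact hPdvd
      exact (mul_dvd_mul_iff_left hDABne).mp h1
    have hDs : D ∣ (s : ℤ) := by
      have hY : D ∣ w * (D * A * B * H ^ 2) := ⟨w * A * B * H ^ 2, by ring⟩
      rw [add_comm] at hDdvd
      have h2 : D ∣ (s : ℤ) * (H * (U a b (L + 1)) ^ (s - 1)) :=
        (dvd_add_right hY).mp hDdvd
      have hcops : IsCoprime D (H * (U a b (L + 1)) ^ (s - 1)) :=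
        hcopDH.mul_right hcopDu.pow_right
      exact hcops.dvd_of_dvd_mul_right h2
    have hcs : c ∣ s := by
      rw [← hcD] at hDs
      exact_mod_cast hDs
    have hsc : s ∣ c := by
      rw [hs, Nat.mul_comm c L] at ht0K
      exact (Nat.mul_dvd_mul_iff_left hLpos).mp ht0K
    rw [hs, Nat.dvd_antisymm hsc hcs]
  have ht0 := tau'_mem hex0
  have hfinal : tau' a b (U a b m * U a b n) = L * c :=
    hkey _ ht0.1 ht0.2 (tau'_dvd hab hex0 (by positivity) hPK)
  have htau : tau a b (U a b m * U a b n) = tau' a b (U a b m * U a b n) := rfl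
  rw [htau, hfinal]
  push_cast
  rw [hcD]
end

section
/- Let n be a positive integer and p ≥ 3 a prime number. If p ∤ n and n is odd, then τ(U_n · U_{n+p} · U_{n+2p}) = n(n+p)(n+2p). -/
namespace LucasAux

variable (a b : ℤ)

lemma U_zero : U a b 0 = 0 := rfl
lemma U_one : U a b 1 = 1 := rfl
lemma U_two : U a b 2 = a := by simp [U]
lemma U_rec (k : ℕ) : U a b (k + 2) = a * U a b (k + 1) + b * U a b k := rfl

/-- Addition formula for the first Lucas sequence. -/
lemma U_add (m n : ℕ) :
    U a b (m + n + 1) = U a b (m + 1) * U a b (n + 1) + b * U a b m * U a b n := by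
  induction m using Nat.twoStepInduction with
  | zero => simp [U]
  | one =>
    have : 1 + n + 1 = n + 2 := by omega
    rw [this, U_rec, U_two, U_one]; ring
  | more m ih1 ih2 =>
    have h1 : m + 2 + n + 1 = (m + n + 1) + 2 := by omega
    have h2 : m + 1 + n + 1 = (m + n + 1) + 1 := by omega
    have h3 : m + 1 + 1 = m + 2 := by omega
    rw [h3] at ih2
    rw [h2] at ih2
    have h4 : m + 2 + 1 = m + 3 := rfl
    have h5 : U a b (m + 3) = a * U a b (m + 2) + b * U a b (m + 1) := U_rec a b (m + 1)
    have h6 : U a b (m + 2) = a * U a b (m + 1) + b * U a b m := U_rec a b m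
    rw [h1, U_rec, ih2, ih1, h4, h5, h6]
    ring

variable {a b}

lemma U_pos_aux (ha : 0 < a) (hΔ : 0 < a ^ 2 + 4 * b) :
    ∀ n : ℕ, 0 < U a b (n + 1) ∧ a * U a b (n + 1) ≤ 2 * U a b (n + 2) := by
  intro n
  induction n with
  | zero =>
    refine ⟨by norm_num [U_one], ?_⟩
    rw [U_one, U_two]; linarith
  | succ m ih =>
    obtain ⟨h1, h2⟩ := ih
    have hpos : 0 < U a b (m + 2) := by nlinarith
    refine ⟨hpos, ?_⟩
    rw [show m + 1 + 2 = m + 3 from rfl, U_rec a b (m + 1)]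
    nlinarith [mul_le_mul_of_nonneg_left h2 ha.le, mul_pos hpos ha]

lemma U_pos (ha : 0 < a) (hΔ : 0 < a ^ 2 + 4 * b) {n : ℕ} (hn : 0 < n) :
    0 < U a b n := by
  obtain ⟨m, rfl⟩ : ∃ m, n = m + 1 := ⟨n - 1, by omega⟩
  exact (U_pos_aux ha hΔ m).1

lemma U_strict (ha : 0 < a) (hΔ : 0 < a ^ 2 + 4 * b) (hb1 : a = 1 → 1 ≤ b) :
    ∀ n : ℕ, 1 ≤ n → U a b (n + 1) < U a b (n + 2) := by
  rintro n hn
  obtain ⟨m, rfl⟩ : ∃ m, n = m + 1 := ⟨n - 1, by omega⟩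
  obtain ⟨h1, h2⟩ := U_pos_aux ha hΔ m
  have h3 : 0 < U a b (m + 2) := (U_pos_aux ha hΔ (m + 1)).1
  rw [show m + 1 + 2 = m + 3 from rfl, U_rec a b (m + 1)]
  rcases eq_or_lt_of_le (by omega : (1 : ℤ) ≤ a) with h | h
  · have hb := hb1 h.symm
    nlinarith
  · have h2a : 2 ≤ a := h
    nlinarith [mul_le_mul_of_nonneg_left h2 (by linarith : (0:ℤ) ≤ a - 1)]

lemma U_mono (ha : 0 < a) (hΔ : 0 < a ^ 2 + 4 * b) (hb1 : a = 1 → 1 ≤ b) :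
    ∀ i j : ℕ, 1 ≤ i → i ≤ j → U a b i ≤ U a b j := by
  intro i j hi hij
  obtain ⟨d, rfl⟩ := Nat.exists_eq_add_of_le hij
  clear hij
  induction d with
  | zero => exact le_refl _
  | succ e ih =>
    refine le_trans ih ?_
    have step : U a b (i + e) ≤ U a b (i + e + 1) := by
      rcases Nat.lt_or_ge (i + e) 2 with h | h
      · have : i + e = 1 := by omega
        rw [this, U_one, U_two]; linarith
      · have := U_strict ha hΔ hb1 (i + e - 1) (by omega)
        rw [show i + e - 1 + 1 = i + e by omega, show i + e - 1 + 2 = i + e + 1 by omega] at this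
        exact this.le
    exact (show i + (e + 1) = i + e + 1 from rfl) ▸ step

lemma U_lt (ha : 0 < a) (hΔ : 0 < a ^ 2 + 4 * b) (hb1 : a = 1 → 1 ≤ b)
    {j k : ℕ} (hj : 1 ≤ j) (hjk : j < k) (hk : 3 ≤ k) : U a b j < U a b k := by
  rcases Nat.lt_or_ge j 2 with h | h
  · have hj1 : j = 1 := by omega
    subst hj1
    calc U a b 1 ≤ U a b 2 := by rw [U_one, U_two]; linarith
    _ < U a b 3 := U_strict ha hΔ hb1 1 le_rfl
    _ ≤ U a b k := U_mono ha hΔ hb1 3 k (by omega) hk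
  · calc U a b j < U a b (j + 1) := by
          have := U_strict ha hΔ hb1 (j - 1) (by omega)
          rwa [show j - 1 + 1 = j by omega, show j - 1 + 2 = j + 1 by omega] at this
    _ ≤ U a b k := U_mono ha hΔ hb1 (j + 1) k (by omega) (by omega)

lemma coprime_b_U (hab : IsCoprime a b) : ∀ n : ℕ, IsCoprime b (U a b (n + 1)) := by
  intro n
  induction n using Nat.twoStepInduction with
  | zero => rw [U_one]; exact isCoprime_one_right
  | one =>
    have h2 : U a b (1 + 1) = a := by
      rw [show (1:ℕ) + 1 = 0 + 2 from rfl, U_rec, U_one, U_zero]; ring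
    rw [h2]; exact hab.symm
  | more m ih1 ih2 =>
    rw [show m + 1 + 1 + 1 = m + 1 + 2 from rfl, U_rec]
    have h1 : IsCoprime b (a * U a b (m + 1 + 1)) := hab.symm.mul_right ih2
    exact h1.add_mul_left_right (U a b (m + 1))

lemma coprime_U_succ (hab : IsCoprime a b) : ∀ n : ℕ, IsCoprime (U a b n) (U a b (n + 1)) := by
  intro n
  induction n with
  | zero => rw [U_zero, U_one]; exact isCoprime_one_right
  | succ m ih =>
    rw [U_rec]
    have h1 : IsCoprime (U a b (m + 1)) (b * U a b m) :=
      ((coprime_b_U hab m).symm).mul_right ih.symm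
    have h3 := h1.add_mul_left_right a
    have h4 : a * U a b (m + 1) + b * U a b m
        = b * U a b m + U a b (m + 1) * a := by ring
    rw [h4]; exact h3

lemma dvd_U_add {m : ℤ} {i j : ℕ} (hi : m ∣ U a b i) (hj : m ∣ U a b j) :
    m ∣ U a b (i + j) := by
  rcases j with _ | j'
  · simpa using hi
  · rw [show i + (j' + 1) = i + j' + 1 from rfl, U_add]
    exact dvd_add (hj.mul_left _) ((hi.mul_left b).mul_right _)

lemma dvd_U_sub (hab : IsCoprime a b) {m : ℤ} {i j : ℕ}
    (hi : m ∣ U a b i) (hij : m ∣ U a b (i + j)) : m ∣ U a b j := by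
  rcases j with _ | j'
  · simp [U_zero]
  · rw [show i + (j' + 1) = i + j' + 1 from rfl, U_add] at hij
    have h1 : m ∣ U a b (i + 1) * U a b (j' + 1) := by
      have := hij.sub ((hi.mul_left b).mul_right (U a b j'))
      simpa using this
    have hco : IsCoprime m (U a b (i + 1)) :=
      IsCoprime.of_isCoprime_of_dvd_left (coprime_U_succ hab i) hi
    exact hco.dvd_of_dvd_mul_left h1

lemma dvd_U_mul {m : ℤ} {t : ℕ} (ht : m ∣ U a b t) (q : ℕ) : m ∣ U a b (t * q) := by
  induction q with
  | zero => simp [U_zero]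
  | succ r ih => rw [Nat.mul_succ]; exact dvd_U_add ih ht

lemma U_dvd_U {i j : ℕ} (h : i ∣ j) : U a b i ∣ U a b j := by
  obtain ⟨q, rfl⟩ := h
  exact dvd_U_mul dvd_rfl q

lemma tau_spec {m : ℤ} {N : ℕ} (hN : 0 < N) (hmN : m ∣ U a b N) :
    0 < tau a b m ∧ m ∣ U a b (tau a b m) :=
  Nat.sInf_mem (⟨N, hN, hmN⟩ : {k : ℕ | 0 < k ∧ m ∣ U a b k}.Nonempty)

lemma tau_le {m : ℤ} {k : ℕ} (hk : 0 < k) (hmk : m ∣ U a b k) : tau a b m ≤ k :=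
  Nat.sInf_le ⟨hk, hmk⟩

/-- Fundamental property of the order of appearance. -/
lemma dvd_U_iff_tau_dvd (hab : IsCoprime a b) {m : ℤ} {N : ℕ} (hN : 0 < N)
    (hmN : m ∣ U a b N) : ∀ k : ℕ, m ∣ U a b k ↔ tau a b m ∣ k := by
  obtain ⟨htpos, htdvd⟩ := tau_spec hN hmN
  intro k
  constructor
  · intro hk
    have hkeq : tau a b m * (k / tau a b m) + k % tau a b m = k := Nat.div_add_mod k _
    have hrlt : k % tau a b m < tau a b m := Nat.mod_lt _ htpos
    have hrd : m ∣ U a b (k % tau a b m) := by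
      rcases Nat.eq_zero_or_pos (k / tau a b m) with h0 | h0
      · have hlt : k < tau a b m := by
          rcases Nat.lt_or_ge k (tau a b m) with h | h
          · exact h
          · exact absurd (Nat.div_pos h htpos) (by omega)
        rwa [Nat.mod_eq_of_lt hlt]
      · exact dvd_U_sub hab (dvd_U_mul htdvd _) (by rwa [hkeq])
    rcases Nat.eq_zero_or_pos (k % tau a b m) with h0 | h0
    · exact Nat.dvd_of_mod_eq_zero h0
    · exact absurd (tau_le h0 hrd) (by omega)
  · rintro ⟨q, rfl⟩
    exact dvd_U_mul htdvd q

/-- For `k ≥ 1`, `k ≠ 2`, the order of appearance of `U k` is `k`. -/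
lemma tau_U_eq (hab : IsCoprime a b) (ha : 0 < a) (hΔ : 0 < a ^ 2 + 4 * b)
    (hb1 : a = 1 → 1 ≤ b) {k : ℕ} (hk : 0 < k) (hk2 : k ≠ 2) :
    tau a b (U a b k) = k := by
  have hUk : U a b k ∣ U a b k := dvd_rfl
  obtain ⟨htpos, htdvd⟩ := tau_spec hk hUk
  have htk : tau a b (U a b k) ∣ k := (dvd_U_iff_tau_dvd hab hk hUk k).mp dvd_rfl
  have hle : tau a b (U a b k) ≤ k := Nat.le_of_dvd hk htk
  rcases Nat.eq_or_lt_of_le hle with h | h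
  · exact h
  · exfalso
    have hUtk : U a b (tau a b (U a b k)) ∣ U a b k := U_dvd_U htk
    have heq : U a b (tau a b (U a b k)) = U a b k :=
      Int.dvd_antisymm (U_pos ha hΔ htpos).le (U_pos ha hΔ hk).le hUtk htdvd
    have hk3 : 3 ≤ k := by
      rcases Nat.lt_or_ge k 3 with h' | h'
      · interval_cases k
        · omega
        · simp at hk2
      · exact h'
    have := U_lt ha hΔ hb1 htpos h hk3
    omega

/-- If the indices are coprime, the corresponding Lucas numbers are coprime. -/
lemma coprime_U_of_coprime (hab : IsCoprime a b) {i j : ℕ} (hi : 0 < i)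
    (h : Nat.Coprime i j) : IsCoprime (U a b i) (U a b j) := by
  rw [Int.isCoprime_iff_gcd_eq_one]
  have hgi : (Int.gcd (U a b i) (U a b j) : ℤ) ∣ U a b i := Int.gcd_dvd_left _ _
  have hgj : (Int.gcd (U a b i) (U a b j) : ℤ) ∣ U a b j := Int.gcd_dvd_right _ _
  have hiff := dvd_U_iff_tau_dvd hab hi hgi
  have t1 := (hiff i).mp hgi
  have t2 := (hiff j).mp hgj
  have htg : tau a b (Int.gcd (U a b i) (U a b j) : ℤ) ∣ Nat.gcd i j := Nat.dvd_gcd t1 t2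
  rw [h] at htg
  have ht1 : tau a b (Int.gcd (U a b i) (U a b j) : ℤ) = 1 := Nat.dvd_one.mp htg
  have : (Int.gcd (U a b i) (U a b j) : ℤ) ∣ U a b 1 := (hiff 1).mpr (by rw [ht1])
  rw [U_one] at this
  exact Nat.eq_one_of_dvd_one (by exact_mod_cast this)

end LucasAux

theorem tau_triple_case1 (a b : ℤ) (hab : IsCoprime a b) (ha : 0 < a)
    (hΔ : 0 < a ^ 2 + 4 * b) (hnd : Nondegenerate a b)
    (n p : ℕ) (hn : 0 < n) (hp : p.Prime) (hp3 : 3 ≤ p)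
    (hpn : ¬ p ∣ n) (hodd : Odd n) :
    tau a b (U a b n * U a b (n + p) * U a b (n + 2 * p)) = n * (n + p) * (n + 2 * p) := by
  classical
  open LucasAux in
  -- `a = 1` forces `b ≥ 1`
  have hb1 : a = 1 → 1 ≤ b := by
    intro h
    subst h
    have hb0 := hnd.1
    have : (0:ℤ) < 1 + 4 * b := by nlinarith
    omega
  -- positivity of the indices
  have hn2 : 0 < n + p := by omega
  have hn3 : 0 < n + 2 * p := by omega
  -- the indices are not 2
  have hne1 : n ≠ 2 := by
    rintro rfl
    exact (Nat.not_odd_iff_even.mpr (by decide)) hodd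
  have hne2 : n + p ≠ 2 := by
    have := hp.two_le
    omega
  have hne3 : n + 2 * p ≠ 2 := by omega
  -- pairwise coprimality of the indices
  have cpn : Nat.Coprime p n := (hp.coprime_iff_not_dvd).mpr hpn
  have c2 : Nat.Coprime n 2 := Nat.coprime_two_right.mpr hodd
  have c12 : Nat.Coprime n (n + p) := by
    have h := Nat.coprime_add_self_right (m := n) (n := p)
    rw [Nat.add_comm] at h
    exact h.mpr cpn.symm
  have c13 : Nat.Coprime n (n + 2 * p) := by
    have h2p : Nat.Coprime n (2 * p) := c2.mul_right cpn.symm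
    have h := Nat.coprime_add_self_right (m := n) (n := 2 * p)
    rw [Nat.add_comm] at h
    exact h.mpr h2p
  have c23 : Nat.Coprime (n + p) (n + 2 * p) := by
    have hpnp : Nat.Coprime (n + p) p := by
      refine ((hp.coprime_iff_not_dvd).mpr ?_).symm
      intro hdvd
      have := Nat.dvd_sub hdvd (dvd_refl p)
      rw [show n + p - p = n by omega] at this
      exact hpn this
    have h := Nat.coprime_add_self_right (m := n + p) (n := p)
    rw [show p + (n + p) = n + 2 * p by omega] at h
    exact h.mpr hpnp
  -- coprimality of the Lucas numbers
  have u12 : IsCoprime (U a b n) (U a b (n + p)) := coprime_U_of_coprime hab hn c12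
  have u13 : IsCoprime (U a b n) (U a b (n + 2 * p)) := coprime_U_of_coprime hab hn c13
  have u23 : IsCoprime (U a b (n + p)) (U a b (n + 2 * p)) := coprime_U_of_coprime hab hn2 c23
  -- divisibility criteria for each factor
  have iff1 : ∀ k, U a b n ∣ U a b k ↔ n ∣ k := by
    have h := dvd_U_iff_tau_dvd hab hn (dvd_rfl (a := U a b n))
    rwa [tau_U_eq hab ha hΔ hb1 hn hne1] at h
  have iff2 : ∀ k, U a b (n + p) ∣ U a b k ↔ (n + p) ∣ k := by
    have h := dvd_U_iff_tau_dvd hab hn2 (dvd_rfl (a := U a b (n + p)))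
    rwa [tau_U_eq hab ha hΔ hb1 hn2 hne2] at h
  have iff3 : ∀ k, U a b (n + 2 * p) ∣ U a b k ↔ (n + 2 * p) ∣ k := by
    have h := dvd_U_iff_tau_dvd hab hn3 (dvd_rfl (a := U a b (n + 2 * p)))
    rwa [tau_U_eq hab ha hΔ hb1 hn3 hne3] at h
  set m : ℤ := U a b n * U a b (n + p) * U a b (n + 2 * p) with hm
  set N : ℕ := n * (n + p) * (n + 2 * p) with hN
  have hNpos : 0 < N := by positivity
  -- the key divisibility equivalence
  have key : ∀ k, m ∣ U a b k ↔ N ∣ k := by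
    intro k
    constructor
    · intro hk
      have d1 : U a b n ∣ U a b k :=
        dvd_trans ⟨U a b (n + p) * U a b (n + 2 * p), by rw [hm]; ring⟩ hk
      have d2 : U a b (n + p) ∣ U a b k :=
        dvd_trans ⟨U a b n * U a b (n + 2 * p), by rw [hm]; ring⟩ hk
      have d3 : U a b (n + 2 * p) ∣ U a b k :=
        dvd_trans ⟨U a b n * U a b (n + p), by rw [hm]; ring⟩ hk
      have e1 : n ∣ k := (iff1 k).mp d1
      have e2 : (n + p) ∣ k := (iff2 k).mp d2
      have e3 : (n + 2 * p) ∣ k := (iff3 k).mp d3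
      have e12 : n * (n + p) ∣ k := Nat.Coprime.mul_dvd_of_dvd_of_dvd c12 e1 e2
      have c123 : Nat.Coprime (n * (n + p)) (n + 2 * p) := Nat.Coprime.mul c13 c23
      exact Nat.Coprime.mul_dvd_of_dvd_of_dvd c123 e12 e3
    · intro hk
      have e1 : n ∣ k := dvd_trans ⟨(n + p) * (n + 2 * p), by rw [hN]; ring⟩ hk
      have e2 : (n + p) ∣ k := dvd_trans ⟨n * (n + 2 * p), by rw [hN]; ring⟩ hk
      have e3 : (n + 2 * p) ∣ k := dvd_trans ⟨n * (n + p), by rw [hN]; ring⟩ hk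
      have d12 : U a b n * U a b (n + p) ∣ U a b k :=
        u12.mul_dvd ((iff1 k).mpr e1) ((iff2 k).mpr e2)
      have c' : IsCoprime (U a b n * U a b (n + p)) (U a b (n + 2 * p)) :=
        IsCoprime.mul_left u13 u23
      exact c'.mul_dvd d12 ((iff3 k).mpr e3)
  -- conclude
  have hmN : m ∣ U a b N := (key N).mpr dvd_rfl
  obtain ⟨htpos, htdvd⟩ := tau_spec hNpos hmN
  have h1 : tau a b m ≤ N := tau_le hNpos hmN
  have h2 : N ∣ tau a b m := (key _).mp htdvd
  have h3 : N ≤ tau a b m := Nat.le_of_dvd htpos h2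
  omega
end

section
/- Let n be a positive integer and p ≥ 3 a prime number. If p ∤ n and n is even, then τ(U_n · U_{n+p} · U_{n+2p}) = (n(n+p)(n+2p)/2) · (a / gcd(a, n+p)). -/
namespace Dev

variable {a b : ℤ}

lemma U_zero : U a b 0 = 0 := rfl
lemma U_one : U a b 1 = 1 := rfl
lemma U_two : U a b 2 = a := by simp [U]
lemma U_rec (k : ℕ) : U a b (k + 2) = a * U a b (k + 1) + b * U a b k := by
  simp [U]

/-- Addition formula. -/
lemma U_add (m n : ℕ) :
    U a b (m + n + 1) = U a b (m + 1) * U a b (n + 1) + b * U a b m * U a b n := by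
  induction n using Nat.strong_induction_on generalizing m with
  | _ n ih =>
    match n with
    | 0 => simp [U]
    | 1 =>
      show U a b (m + 2) = _
      rw [U_rec m, U_rec 0]
      simp [U_zero, U_one, U_two]
      ring
    | (n + 2) =>
      have h1 := ih (n + 1) (by omega) m
      have h0 := ih n (by omega) m
      have e : m + (n + 2) + 1 = (m + n + 1) + 2 := by ring
      rw [e, U_rec (m + n + 1)]
      have e1 : m + n + 1 + 1 = m + (n+1) + 1 := by ring
      rw [e1, h1, h0]
      have e2 : n + 2 + 1 = (n+1) + 2 := by ring
      have e3 : n + 2 = n + 2 := rfl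
      rw [e2, U_rec (n+1), U_rec n]
      ring


/-- `U i ∣ U (i*t)`. -/
lemma U_dvd_U_mul (i t : ℕ) : U a b i ∣ U a b (i * t) := by
  induction t with
  | zero => simp [U_zero]
  | succ t ih =>
    rcases Nat.eq_zero_or_pos i with hi | hi
    · simp [hi, U_zero]
    · obtain ⟨j, rfl⟩ := Nat.exists_eq_add_of_le hi
      set i := 1 + j with hidef
      have e : i * (t + 1) = i * t + j + 1 := by rw [hidef]; ring
      rw [e, U_add]
      have e2 : j + 1 = i := by omega
      rw [e2]
      exact dvd_add (dvd_mul_left _ _) ((ih.mul_left b).mul_right _)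

lemma isCoprime_b_U (hab : IsCoprime a b) (k : ℕ) : IsCoprime b (U a b (k + 1)) := by
  induction k with
  | zero => simpa [U_one] using isCoprime_one_right
  | succ k ih =>
    rw [U_rec]
    have h1 : IsCoprime b (a * U a b (k + 1)) := (hab.symm.mul_right ih)
    simpa [mul_comm] using h1.add_mul_left_right (U a b k)

lemma isCoprime_U_succ (hab : IsCoprime a b) (k : ℕ) :
    IsCoprime (U a b (k + 1)) (U a b (k + 2)) := by
  induction k with
  | zero => simpa [U_one] using isCoprime_one_left
  | succ k ih =>
    rw [U_rec]
    have h1 : IsCoprime (U a b (k + 2)) (b * U a b (k + 1)) :=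
      (isCoprime_b_U hab (k+1)).symm.mul_right ih.symm
    have h2 := h1.add_mul_left_right a
    have e : b * U a b (k + 1) + U a b (k + 2) * a = a * U a b (k + 2) + b * U a b (k + 1) := by
      ring
    rwa [e] at h2

/-- Subtraction step: if `m'` divides `U i` and `U (i+t)` with `i ≥ 1`, it divides `U t`. -/
lemma dvd_U_sub (hab : IsCoprime a b) {m' : ℤ} (i t : ℕ) (hi : 1 ≤ i)
    (h1 : m' ∣ U a b i) (h2 : m' ∣ U a b (i + t)) : m' ∣ U a b t := by
  rcases Nat.eq_zero_or_pos t with ht | ht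
  · simp [ht, U_zero]
  · obtain ⟨j, rfl⟩ : ∃ j, i = j + 1 := ⟨i - 1, by omega⟩
    obtain ⟨s, rfl⟩ : ∃ s, t = s + 1 := ⟨t - 1, by omega⟩
    have e : j + 1 + (s + 1) = (j + 1) + s + 1 := by ring
    rw [e, U_add] at h2
    have h3 : m' ∣ U a b (j + 1 + 1) * U a b (s + 1) := by
      have hb : m' ∣ b * U a b (j + 1) * U a b s :=
        Dvd.dvd.mul_right (Dvd.dvd.mul_left h1 b) _
      have := dvd_sub h2 hb
      simpa using this
    have hcop : IsCoprime m' (U a b (j + 1 + 1)) :=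
      IsCoprime.of_isCoprime_of_dvd_left (isCoprime_U_succ hab j) h1
    exact hcop.dvd_of_dvd_mul_left h3


/-- Common divisors of `U i` and `U j` divide `U (gcd i j)`. -/
lemma dvd_U_gcd (hab : IsCoprime a b) (m' : ℤ) (i j : ℕ)
    (h1 : m' ∣ U a b i) (h2 : m' ∣ U a b j) : m' ∣ U a b (Nat.gcd i j) := by
  induction i using Nat.strong_induction_on generalizing j with
  | _ i ih =>
    rcases Nat.eq_zero_or_pos i with hi | hi
    · simpa [hi, Nat.gcd_zero_left] using h2
    · rw [Nat.gcd_rec i j]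
      apply ih (j % i) (Nat.mod_lt _ hi) i _ h1
      -- m' ∣ U (j % i)
      rcases Nat.eq_zero_or_pos (j / i) with hq | hq
      · have hj : j < i := by
          by_contra hcon
          have := Nat.div_le_div_right (c := i) (Nat.le_of_not_lt hcon)
          rw [Nat.div_self hi] at this
          omega
        rwa [Nat.mod_eq_of_lt hj]
      · have hij : i * (j / i) + j % i = j := Nat.div_add_mod j i
        have hdvd_it : m' ∣ U a b (i * (j / i)) := h1.trans (U_dvd_U_mul i (j / i))
        apply dvd_U_sub hab (i * (j / i)) (j % i) _ hdvd_it
        · rwa [hij]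
        · have : 1 ≤ i * (j / i) := Nat.one_le_iff_ne_zero.mpr (by positivity)
          exact this

/-- `U (2t+1) ≡ b^t  (mod a)`. -/
lemma odd_mod_a (t : ℕ) : a ∣ (U a b (2 * t + 1) - b ^ t) := by
  induction t with
  | zero => simp [U_one]
  | succ t ih =>
    have e : 2 * (t + 1) + 1 = (2 * t + 1) + 2 := by ring
    rw [e, U_rec]
    have : a * U a b (2 * t + 1 + 1) + b * U a b (2 * t + 1) - b ^ (t + 1)
        = a * U a b (2 * t + 1 + 1) + b * (U a b (2 * t + 1) - b ^ t) := by ring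
    rw [this]
    exact dvd_add (dvd_mul_right _ _) (ih.mul_left b)

/-- `a ∣ U (2t)`. -/
lemma a_dvd_even (t : ℕ) : a ∣ U a b (2 * t) := by
  induction t with
  | zero => simp [U_zero]
  | succ t ih =>
    have e : 2 * (t + 1) = 2 * t + 2 := by ring
    rw [e, U_rec]
    exact dvd_add (dvd_mul_right _ _) (ih.mul_left b)

/-- `U (k+1) ≡ a^k (mod b)`. -/
lemma U_mod_b (k : ℕ) : b ∣ (U a b (k + 1) - a ^ k) := by
  induction k with
  | zero => simp [U_one]
  | succ k ih =>
    rw [U_rec]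
    have : a * U a b (k + 1) + b * U a b k - a ^ (k + 1)
        = a * (U a b (k + 1) - a ^ k) + b * U a b k := by ring
    rw [this]
    exact dvd_add (ih.mul_left a) (dvd_mul_right _ _)


section Growth

variable (ha : 0 < a) (hD : 0 < a ^ 2 + 4 * b) (hb : b ≠ 0)
include ha hD hb

lemma U_pos_le : ∀ k : ℕ, (1 ≤ U a b (k + 1)) ∧ 2 * U a b (k + 2) ≥ a * U a b (k + 1)
      ∧ U a b (k + 1) ≤ U a b (k + 2) := by
  rcases lt_or_ge b 0 with hbneg | hbpos
  · have hb1 : b ≤ -1 := by omega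
    have ha3 : 3 ≤ a := by nlinarith
    intro k
    induction k with
    | zero =>
      refine ⟨le_refl _, ?_, ?_⟩ <;> rw [U_one, U_two] <;> nlinarith
    | succ k ih =>
      obtain ⟨h1, h2, h3⟩ := ih
      have e2 : U a b (k + 2) ≥ 1 := by nlinarith
      have hrec : U a b (k + 3) = a * U a b (k + 2) + b * U a b (k + 1) := U_rec (k + 1)
      have hp1 : a * (a * U a b (k + 1)) ≤ a * (2 * U a b (k + 2)) :=
        mul_le_mul_of_nonneg_left h2 ha.le
      have hp2 : (1 - 4 * b) * U a b (k + 1) ≤ a ^ 2 * U a b (k + 1) :=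
        mul_le_mul_of_nonneg_right (by nlinarith) (by linarith)
      have e3 : 2 * U a b (k + 3) ≥ a * U a b (k + 2) := by nlinarith
      refine ⟨e2, e3, ?_⟩
      nlinarith
  · have hb1 : 1 ≤ b := by omega
    intro k
    induction k with
    | zero =>
      refine ⟨le_refl _, ?_, ?_⟩ <;> rw [U_one, U_two] <;> nlinarith
    | succ k ih =>
      obtain ⟨h1, h2, h3⟩ := ih
      have e2 : U a b (k + 2) ≥ 1 := le_trans h1 h3
      have hrec : U a b (k + 3) = a * U a b (k + 2) + b * U a b (k + 1) := U_rec (k + 1)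
      refine ⟨e2, ?_, ?_⟩ <;> nlinarith

lemma U_pos (k : ℕ) : 1 ≤ U a b (k + 1) := (U_pos_le ha hD hb k).1

lemma U_ne_zero {k : ℕ} (hk : 1 ≤ k) : U a b k ≠ 0 := by
  obtain ⟨j, rfl⟩ : ∃ j, k = j + 1 := ⟨k - 1, by omega⟩
  have := U_pos ha hD hb j
  omega

lemma U_le_succ (k : ℕ) : U a b (k + 1) ≤ U a b (k + 2) := (U_pos_le ha hD hb k).2.2

lemma U_lt_succ (k : ℕ) : U a b (k + 2) < U a b (k + 3) := by
  have hrec : U a b (k + 3) = a * U a b (k + 2) + b * U a b (k + 1) := U_rec (k + 1)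
  obtain ⟨h1, h2, h3⟩ := U_pos_le ha hD hb k
  have e2 : U a b (k + 2) ≥ 1 := by
    have := (U_pos_le ha hD hb (k+1)).1
    exact this
  rcases lt_or_ge b 0 with hbneg | hbpos
  · have hb1 : b ≤ -1 := by omega
    have ha3 : 3 ≤ a := by nlinarith
    nlinarith [mul_le_mul_of_nonneg_left h2.le ha.le, mul_le_mul_of_nonneg_left h1 (by nlinarith : (0:ℤ) ≤ (a-1)^2)]
  · have hb1 : 1 ≤ b := by omega
    nlinarith

lemma U_le_of_le {i j : ℕ} (hi : 1 ≤ i) (hij : i ≤ j) : U a b i ≤ U a b j := by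
  induction j with
  | zero => omega
  | succ j ih =>
    rcases Nat.lt_or_ge i (j + 1) with h | h
    · have hj : 1 ≤ j := by omega
      have h1 := ih (by omega)
      obtain ⟨m, rfl⟩ : ∃ m, j = m + 1 := ⟨j - 1, by omega⟩
      exact le_trans h1 (U_le_succ ha hD hb m)
    · have : i = j + 1 := by omega
      subst this
      exact le_refl _

lemma U_lt_of_lt {i j : ℕ} (hi : 1 ≤ i) (hij : i < j) (hj : 3 ≤ j) : U a b i < U a b j := by
  obtain ⟨m, rfl⟩ : ∃ m, j = m + 3 := ⟨j - 3, by omega⟩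
  have h1 : U a b i ≤ U a b (m + 2) := U_le_of_le ha hD hb hi (by omega)
  exact lt_of_le_of_lt h1 (U_lt_succ ha hD hb m)

/-- If `U m ∣ U k` with `m ≥ 3`, `k ≥ 1`, then `m ∣ k`. -/
lemma index_dvd (hab : IsCoprime a b) {m k : ℕ} (hm : 3 ≤ m) (hk : 1 ≤ k)
    (h : U a b m ∣ U a b k) : m ∣ k := by
  set g := Nat.gcd m k with hg
  have hUg : U a b m ∣ U a b g :=
    dvd_U_gcd hab _ m k dvd_rfl h
  have hgpos : 1 ≤ g := Nat.le_of_lt_succ (by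
    have := Nat.gcd_pos_of_pos_left k (show 0 < m by omega)
    omega)
  have hgm : g ∣ m := Nat.gcd_dvd_left m k
  rcases Nat.lt_or_ge g m with hlt | hge
  · exfalso
    have h1 : U a b g < U a b m := U_lt_of_lt ha hD hb hgpos hlt hm
    have h2 : U a b m ≤ U a b g := Int.le_of_dvd (by
      have := U_pos ha hD hb (g - 1)
      have e : g - 1 + 1 = g := by omega
      rw [e] at this
      omega) hUg
    omega
  · have : g = m := Nat.le_antisymm (Nat.le_of_dvd (by omega) hgm) hge
    rw [← this]
    exact Nat.gcd_dvd_right m k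

end Growth


/-- `U (r s + 1) ≡ U (r+1)^s  (mod (U r)^2)`. -/
lemma Q_cong (r' s : ℕ) :
    (U a b (r' + 1)) ^ 2 ∣ (U a b ((r' + 1) * s + 1) - (U a b (r' + 2)) ^ s) := by
  induction s with
  | zero => simp [U_one]
  | succ s ih =>
    have hrec : U a b ((r' + 1) * (s + 1) + 1)
        = U a b ((r' + 1) * s + 1) * U a b (r' + 2) + b * U a b ((r' + 1) * s) * U a b (r' + 1) := by
      have e : (r' + 1) * (s + 1) + 1 = ((r' + 1) * s) + (r' + 1) + 1 := by ring
      rw [e, U_add]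
    obtain ⟨c, hc⟩ := U_dvd_U_mul (a := a) (b := b) (r' + 1) s
    obtain ⟨α, hα⟩ := ih
    have : U a b ((r' + 1) * (s + 1) + 1) - (U a b (r' + 2)) ^ (s + 1)
        = (U a b (r' + 1)) ^ 2 * (α * U a b (r' + 2) + b * c) := by
      rw [hrec, hc]
      have h1 : U a b ((r' + 1) * s + 1) = U a b (r' + 2) ^ s + U a b (r' + 1) ^ 2 * α := by
        linarith [hα]
      rw [h1]
      ring
    rw [this]
    exact Dvd.intro _ rfl

/-- Second-order expansion of `2 * U (r (s+2))`. -/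
lemma P_expand (r' s : ℕ) :
    ∃ γ : ℤ, 2 * U a b ((r' + 1) * (s + 2))
      = 2 * ((s : ℤ) + 2) * U a b (r' + 1) * (U a b (r' + 2)) ^ (s + 1)
        - ((s : ℤ) + 1) * ((s : ℤ) + 2) * a * (U a b (r' + 1)) ^ 2 * (U a b (r' + 2)) ^ s
        + (U a b (r' + 1)) ^ 3 * γ := by
  induction s with
  | zero =>
    refine ⟨0, ?_⟩
    have hadd : U a b (r' + (r' + 1) + 1)
        = U a b (r' + 1) * U a b (r' + 2) + b * U a b r' * U a b (r' + 1) := U_add r' (r' + 1)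
    have e : (r' + 1) * (0 + 2) = r' + (r' + 1) + 1 := by ring
    have hw : b * U a b r' = U a b (r' + 2) - a * U a b (r' + 1) := by
      have := U_rec (a := a) (b := b) r'
      linarith
    rw [e, hadd]
    push_cast
    linear_combination 2 * U a b (r' + 1) * hw
  | succ s ih =>
    obtain ⟨γ, hIH⟩ := ih
    obtain ⟨α, hα⟩ := Q_cong (a := a) (b := b) r' (s + 2)
    refine ⟨2 * α + γ * U a b (r' + 2) + ((s : ℤ) + 1) * ((s : ℤ) + 2) * a ^ 2 * (U a b (r' + 2)) ^ s
      - a * U a b (r' + 1) * γ, ?_⟩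
    have hrec : U a b ((r' + 1) * (s + 3))
        = U a b ((r' + 1) * (s + 2) + 1) * U a b (r' + 1)
          + b * U a b ((r' + 1) * (s + 2)) * U a b r' := by
      have e : (r' + 1) * (s + 3) = ((r' + 1) * (s + 2)) + r' + 1 := by ring
      rw [e, U_add]
    have hw : b * U a b r' = U a b (r' + 2) - a * U a b (r' + 1) := by
      have := U_rec (a := a) (b := b) r'
      linarith
    have hq : U a b ((r' + 1) * (s + 2) + 1)
        = (U a b (r' + 2)) ^ (s + 2) + (U a b (r' + 1)) ^ 2 * α := by
      linarith [hα]
    have e2 : (r' + 1) * (s + 1 + 2) = (r' + 1) * (s + 3) := by ring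
    rw [e2, hrec, hq]
    push_cast
    linear_combination (U a b (r' + 2) - a * U a b (r' + 1)) * hIH
      + 2 * U a b ((r' + 1) * (s + 2)) * hw


/-- `q`-adic valuation of an integer. -/
def vI (q : ℕ) (x : ℤ) : ℕ := x.natAbs.factorization q

lemma vI_mul (q : ℕ) {x y : ℤ} (hx : x ≠ 0) (hy : y ≠ 0) :
    vI q (x * y) = vI q x + vI q y := by
  unfold vI
  rw [Int.natAbs_mul, Nat.factorization_mul (by simpa using hx) (by simpa using hy)]
  simp

lemma vI_pow (q : ℕ) (x : ℤ) (k : ℕ) : vI q (x ^ k) = k * vI q x := by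
  unfold vI
  rw [Int.natAbs_pow, Nat.factorization_pow]
  simp

lemma vI_pow_dvd_iff {q : ℕ} (hq : q.Prime) {x : ℤ} (hx : x ≠ 0) (t : ℕ) :
    (q : ℤ) ^ t ∣ x ↔ t ≤ vI q x := by
  unfold vI
  rw [← Nat.Prime.pow_dvd_iff_le_factorization hq (by simpa using hx)]
  constructor
  · intro h
    have h2 := Int.natAbs_dvd_natAbs.mpr h
    rw [Int.natAbs_pow] at h2
    simpa using h2
  · intro h
    have h2 : ((q : ℤ)) ^ t ∣ (x.natAbs : ℤ) := by
      have := Int.natCast_dvd_natCast.mpr h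
      exact_mod_cast this
    exact Int.dvd_natAbs.mp h2

lemma vI_dvd {q : ℕ} (hq : q.Prime) {x : ℤ} (hx : x ≠ 0) : (q : ℤ) ^ (vI q x) ∣ x :=
  (vI_pow_dvd_iff hq hx _).mpr le_rfl

lemma vI_eq_of {q : ℕ} (hq : q.Prime) {x : ℤ} {t : ℕ}
    (h1 : (q : ℤ) ^ t ∣ x) (h2 : ¬ (q : ℤ) ^ (t + 1) ∣ x) : vI q x = t := by
  have hx : x ≠ 0 := by
    rintro rfl
    exact h2 (dvd_zero _)
  have hle := (vI_pow_dvd_iff hq hx t).mp h1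
  have hlt : ¬ (t + 1 ≤ vI q x) := fun h => h2 ((vI_pow_dvd_iff hq hx _).mpr h)
  omega

lemma vI_eq_zero_of_not_dvd {q : ℕ} (hq : q.Prime) {x : ℤ} (h : ¬ (q : ℤ) ∣ x) :
    vI q x = 0 := by
  apply vI_eq_of hq (one_dvd _)
  simpa using h

lemma vI_add_eq {q : ℕ} (hq : q.Prime) {A B : ℤ} {t : ℕ} (hA : A ≠ 0)
    (h1 : vI q A = t) (hB : (q : ℤ) ^ (t + 1) ∣ B) : vI q (A + B) = t := by
  apply vI_eq_of hq
  · exact dvd_add (h1 ▸ vI_dvd hq hA) ((pow_dvd_pow _ (by omega)).trans hB)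
  · intro hcon
    have : (q : ℤ) ^ (t + 1) ∣ A := by
      have := dvd_sub hcon hB
      simpa using this
    have := (vI_pow_dvd_iff hq hA _).mp this
    omega

lemma vI_natCast (q : ℕ) (s : ℕ) : vI q (s : ℤ) = s.factorization q := by
  unfold vI
  simp


lemma vI_neg (q : ℕ) (x : ℤ) : vI q (-x) = vI q x := by
  unfold vI
  rw [Int.natAbs_neg]

lemma prime_int_not_unit {q : ℕ} (hq : q.Prime) : ¬ IsUnit (q : ℤ) := by
  intro h
  rw [Int.isUnit_iff] at h
  have h2 := hq.two_le
  rcases h with h1 | h1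
  · have : q = 1 := by exact_mod_cast h1
    omega
  · have : (0 : ℤ) ≤ (q : ℤ) := Int.natCast_nonneg q
    omega

section Rep

variable (ha : 0 < a) (hD : 0 < a ^ 2 + 4 * b) (hb : b ≠ 0) (hab : IsCoprime a b)
include ha hD hb hab

lemma not_dvd_U_succ_of_dvd {q : ℕ} (hq : q.Prime) {r' : ℕ}
    (hqr : (q : ℤ) ∣ U a b (r' + 1)) : ¬ (q : ℤ) ∣ U a b (r' + 2) := by
  intro hdvd
  exact prime_int_not_unit hq ((isCoprime_U_succ hab r').isUnit_of_dvd' hqr hdvd)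

/-- Law of repetition, coprime multiplier. -/
lemma L2 {q : ℕ} (hq : q.Prime) (hq2 : q = 2 → (2 : ℤ) ∣ a) {r s : ℕ}
    (hr : 1 ≤ r) (hs : 1 ≤ s) (hqr : (q : ℤ) ∣ U a b r) (hqs : ¬ q ∣ s) :
    vI q (U a b (r * s)) = vI q (U a b r) := by
  obtain ⟨r', rfl⟩ : ∃ r'', r = r'' + 1 := ⟨r - 1, by omega⟩
  rcases Nat.lt_or_ge s 2 with hs2 | hs2
  · have hs1 : s = 1 := by omega
    rw [hs1, mul_one]
  · obtain ⟨s'', rfl⟩ : ∃ t, s = t + 2 := ⟨s - 2, by omega⟩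
    obtain ⟨γ, hP⟩ := P_expand (a := a) (b := b) r' s''
    set u := U a b (r' + 1) with hu
    set x := U a b (r' + 2) with hx
    have hune : u ≠ 0 := U_ne_zero ha hD hb (by omega)
    have hxne : x ≠ 0 := U_ne_zero ha hD hb (by omega)
    have he1 : 1 ≤ vI q u := (vI_pow_dvd_iff hq hune 1).mp (by rwa [pow_one])
    have hqx : ¬ (q : ℤ) ∣ x := not_dvd_U_succ_of_dvd ha hD hb hab hq hqr
    set e := vI q u with hedef
    have hvx : vI q x = 0 := vI_eq_zero_of_not_dvd hq hqx
    have hsne : ((s'' : ℤ) + 2) ≠ 0 := by positivity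
    have hvs : vI q ((s'' : ℤ) + 2) = 0 := by
      apply vI_eq_zero_of_not_dvd hq
      intro hdvd
      apply hqs
      have h2 : ((q : ℤ)) ∣ ((s'' + 2 : ℕ) : ℤ) := by push_cast; exact hdvd
      exact_mod_cast h2
    set T1 : ℤ := 2 * ((s'' : ℤ) + 2) * u * x ^ (s'' + 1) with hT1def
    set T2 : ℤ := -(((s'' : ℤ) + 1) * ((s'' : ℤ) + 2) * a * u ^ 2 * x ^ s'') with hT2def
    set T3 : ℤ := u ^ 3 * γ with hT3def
    have hT1ne : T1 ≠ 0 := by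
      rw [hT1def]
      apply mul_ne_zero (mul_ne_zero (mul_ne_zero two_ne_zero hsne) hune) (pow_ne_zero _ hxne)
    have hvT1 : vI q T1 = vI q 2 + e := by
      rw [hT1def, vI_mul q (mul_ne_zero (mul_ne_zero two_ne_zero hsne) hune) (pow_ne_zero _ hxne),
        vI_mul q (mul_ne_zero two_ne_zero hsne) hune,
        vI_mul q two_ne_zero hsne, hvs, vI_pow, hvx]
      omega
    have hsum : 2 * U a b ((r' + 1) * (s'' + 2)) = T1 + (T2 + T3) := by
      rw [hT1def, hT2def, hT3def, hP]; ring
    have hdvdT2 : (q : ℤ) ^ (vI q 2 + e + 1) ∣ T2 := by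
      have hT2ne : T2 ≠ 0 := by
        rw [hT2def]
        simp only [neg_ne_zero]
        apply mul_ne_zero (mul_ne_zero (mul_ne_zero (mul_ne_zero (by positivity) hsne) ha.ne')
          (pow_ne_zero _ hune)) (pow_ne_zero _ hxne)
      rw [vI_pow_dvd_iff hq hT2ne]
      rw [hT2def, vI_neg,
        vI_mul q (mul_ne_zero (mul_ne_zero (mul_ne_zero (by positivity) hsne) ha.ne')
          (pow_ne_zero _ hune)) (pow_ne_zero _ hxne),
        vI_mul q (mul_ne_zero (mul_ne_zero (by positivity) hsne) ha.ne') (pow_ne_zero _ hune),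
        vI_mul q (mul_ne_zero (by positivity : ((s'' : ℤ) + 1) ≠ 0) hsne) ha.ne',
        vI_mul q (by positivity : ((s'' : ℤ) + 1) ≠ 0) hsne, vI_pow, vI_pow, hvx, hvs]
      rcases eq_or_ne q 2 with hq2' | hq2'
      · -- q = 2 : use 2 ∣ a and 2 ∣ s''+1
        subst hq2'
        have hva : 1 ≤ vI 2 a :=
          (vI_pow_dvd_iff hq ha.ne' 1).mp (by rw [pow_one]; exact_mod_cast hq2 rfl)
        have hvs1 : 1 ≤ vI 2 ((s'' : ℤ) + 1) := by
          apply (vI_pow_dvd_iff hq (by positivity) 1).mp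
          rw [pow_one]
          have h2 : ((2 : ℕ) : ℤ) ∣ ((s'' + 1 : ℕ) : ℤ) :=
            Int.natCast_dvd_natCast.mpr (by omega)
          push_cast at h2 ⊢
          exact h2
        have hv2 : vI 2 (2 : ℤ) = 1 :=
          vI_eq_of hq (by norm_num) (by norm_num)
        omega
      · have hv2 : vI q 2 = 0 := by
          apply vI_eq_zero_of_not_dvd hq
          intro hdvd
          have : q ∣ 2 := by exact_mod_cast Int.natCast_dvd_natCast.mpr (by exact_mod_cast hdvd)
          have := (Nat.prime_dvd_prime_iff_eq hq Nat.prime_two).mp this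
          exact hq2' this
        omega
    have hdvdT3 : (q : ℤ) ^ (vI q 2 + e + 1) ∣ T3 := by
      rcases eq_or_ne γ 0 with hγ | hγ
      · rw [hT3def, hγ, mul_zero]
        exact dvd_zero _
      · have hT3ne : T3 ≠ 0 := mul_ne_zero (pow_ne_zero _ hune) hγ
        rw [vI_pow_dvd_iff hq hT3ne, hT3def, vI_mul q (pow_ne_zero _ hune) hγ, vI_pow]
        have hv2le : vI q 2 ≤ 1 := by
          rcases eq_or_ne q 2 with h2 | h2
          · subst h2; exact le_of_eq (vI_eq_of hq (by norm_num) (by norm_num))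
          · rw [vI_eq_zero_of_not_dvd hq]
            · omega
            · intro hdvd
              have : q ∣ 2 := by exact_mod_cast Int.natCast_dvd_natCast.mpr (by exact_mod_cast hdvd)
              exact h2 ((Nat.prime_dvd_prime_iff_eq hq Nat.prime_two).mp this)
        omega
    have hmain : vI q (2 * U a b ((r' + 1) * (s'' + 2))) = vI q 2 + e := by
      rw [hsum]
      exact vI_add_eq hq hT1ne hvT1 (dvd_add hdvdT2 hdvdT3)
    have hUne : U a b ((r' + 1) * (s'' + 2)) ≠ 0 :=
      U_ne_zero ha hD hb (Nat.one_le_iff_ne_zero.mpr (by positivity))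
    rw [vI_mul q two_ne_zero hUne] at hmain
    omega


/-- Law of repetition, prime multiplier. -/
lemma L1 {q : ℕ} (hq : q.Prime) (hq2 : q = 2 → (2 : ℤ) ∣ a) {r : ℕ}
    (hr : 1 ≤ r) (hqr : (q : ℤ) ∣ U a b r) :
    vI q (U a b (r * q)) = vI q (U a b r) + 1 := by
  obtain ⟨r', rfl⟩ : ∃ r'', r = r'' + 1 := ⟨r - 1, by omega⟩
  set u := U a b (r' + 1) with hu
  set x := U a b (r' + 2) with hx
  have hune : u ≠ 0 := U_ne_zero ha hD hb (by omega)
  have hxne : x ≠ 0 := U_ne_zero ha hD hb (by omega)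
  have he1 : 1 ≤ vI q u := (vI_pow_dvd_iff hq hune 1).mp (by rwa [pow_one])
  have hqx : ¬ (q : ℤ) ∣ x := not_dvd_U_succ_of_dvd ha hD hb hab hq hqr
  have hvx : vI q x = 0 := vI_eq_zero_of_not_dvd hq hqx
  set e := vI q u with hedef
  rcases eq_or_ne q 2 with hq2' | hq2'
  · -- q = 2 : exact identity U (2r) = u * (2x - a u)
    subst hq2'
    have ha2 : (2 : ℤ) ∣ a := hq2 rfl
    have hid : U a b ((r' + 1) * 2) = u * (2 * x - a * u) := by
      have hadd : U a b (r' + (r' + 1) + 1)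
          = U a b (r' + 1) * U a b (r' + 2) + b * U a b r' * U a b (r' + 1) := U_add r' (r' + 1)
      have e1 : (r' + 1) * 2 = r' + (r' + 1) + 1 := by ring
      have hw : b * U a b r' = U a b (r' + 2) - a * U a b (r' + 1) := by
        have := U_rec (a := a) (b := b) r'
        linarith
      rw [e1, hadd]
      rw [← hu, ← hx]
      linear_combination u * hw
    rw [hid]
    have hv22 : vI 2 (2 : ℤ) = 1 := vI_eq_of hq (by norm_num) (by norm_num)
    have hv2x : vI 2 (2 * x) = 1 := by
      rw [vI_mul 2 two_ne_zero hxne, hvx, hv22]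
    have hfac : vI 2 (2 * x - a * u) = 1 := by
      have h4 : ((2 : ℕ) : ℤ) ^ (1 + 1) ∣ -(a * u) := by
        push_cast
        have h2a : (2 : ℤ) ∣ a := ha2
        have h2u : (2 : ℤ) ∣ u := by exact_mod_cast hqr
        have : (4 : ℤ) ∣ a * u := mul_dvd_mul h2a h2u
        simpa using this.neg_right
      have := vI_add_eq hq (mul_ne_zero two_ne_zero hxne) hv2x h4
      simpa [sub_eq_add_neg] using this
    rw [vI_mul 2 hune (by
      intro h0
      rw [h0] at hfac
      simp [vI] at hfac), hfac]
  · -- q odd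
    have hq3 : 3 ≤ q := by
      have := hq.two_le
      omega
    obtain ⟨s'', hs''⟩ : ∃ t, q = t + 2 := ⟨q - 2, by omega⟩
    obtain ⟨γ, hP⟩ := P_expand (a := a) (b := b) r' s''
    rw [← hu, ← hx] at hP
    have hv2 : vI q 2 = 0 := by
      apply vI_eq_zero_of_not_dvd hq
      intro hdvd
      have : q ∣ 2 := by exact_mod_cast Int.natCast_dvd_natCast.mpr (by exact_mod_cast hdvd)
      exact hq2' ((Nat.prime_dvd_prime_iff_eq hq Nat.prime_two).mp this)
    have hsne : ((s'' : ℤ) + 2) ≠ 0 := by positivity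
    have hvq : vI q ((s'' : ℤ) + 2) = 1 := by
      have hqq : ((s'' : ℤ) + 2) = ((q : ℕ) : ℤ) := by rw [hs'']; push_cast; ring
      rw [hqq]
      apply vI_eq_of hq
      · rw [pow_one]
      · intro hcon
        have h1 : (q : ℤ) * (q : ℤ) ∣ (q : ℤ) := by
          have : ((q : ℤ)) ^ 2 = (q : ℤ) * (q : ℤ) := sq (q : ℤ) ▸ by ring
          rw [← this]
          exact hcon
        have h2 : (q : ℤ) ∣ 1 := by
          rcases h1 with ⟨c, hc⟩
          have hqne : (q : ℤ) ≠ 0 := by exact_mod_cast hq.ne_zero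
          have : (q : ℤ) * c = 1 := by
            have := mul_left_cancel₀ hqne (by linarith [hc] : (q : ℤ) * ((q : ℤ) * c) = (q : ℤ) * 1)
            linarith [this]
          exact ⟨c, this.symm⟩
        exact prime_int_not_unit hq (isUnit_of_dvd_one h2)
    set T1 : ℤ := 2 * ((s'' : ℤ) + 2) * u * x ^ (s'' + 1) with hT1def
    set T2 : ℤ := -(((s'' : ℤ) + 1) * ((s'' : ℤ) + 2) * a * u ^ 2 * x ^ s'') with hT2def
    set T3 : ℤ := u ^ 3 * γ with hT3def
    have hT1ne : T1 ≠ 0 := by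
      rw [hT1def]
      exact mul_ne_zero (mul_ne_zero (mul_ne_zero two_ne_zero hsne) hune) (pow_ne_zero _ hxne)
    have hvT1 : vI q T1 = e + 1 := by
      rw [hT1def, vI_mul q (mul_ne_zero (mul_ne_zero two_ne_zero hsne) hune) (pow_ne_zero _ hxne),
        vI_mul q (mul_ne_zero two_ne_zero hsne) hune,
        vI_mul q two_ne_zero hsne, hvq, vI_pow, hvx, hv2]
      omega
    have hsum : 2 * U a b ((r' + 1) * (s'' + 2)) = T1 + (T2 + T3) := by
      rw [hT1def, hT2def, hT3def, hP]; ring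
    have hdvdT2 : (q : ℤ) ^ (e + 1 + 1) ∣ T2 := by
      have hT2ne : T2 ≠ 0 := by
        rw [hT2def]
        simp only [neg_ne_zero]
        exact mul_ne_zero (mul_ne_zero (mul_ne_zero (mul_ne_zero (by positivity) hsne) ha.ne')
          (pow_ne_zero _ hune)) (pow_ne_zero _ hxne)
      rw [vI_pow_dvd_iff hq hT2ne, hT2def, vI_neg,
        vI_mul q (mul_ne_zero (mul_ne_zero (mul_ne_zero (by positivity) hsne) ha.ne')
          (pow_ne_zero _ hune)) (pow_ne_zero _ hxne),
        vI_mul q (mul_ne_zero (mul_ne_zero (by positivity) hsne) ha.ne') (pow_ne_zero _ hune),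
        vI_mul q (mul_ne_zero (by positivity : ((s'' : ℤ) + 1) ≠ 0) hsne) ha.ne',
        vI_mul q (by positivity : ((s'' : ℤ) + 1) ≠ 0) hsne, vI_pow, vI_pow, hvx, hvq]
      omega
    have hdvdT3 : (q : ℤ) ^ (e + 1 + 1) ∣ T3 := by
      rcases eq_or_ne γ 0 with hγ | hγ
      · rw [hT3def, hγ, mul_zero]; exact dvd_zero _
      · have hT3ne : T3 ≠ 0 := mul_ne_zero (pow_ne_zero _ hune) hγ
        rw [vI_pow_dvd_iff hq hT3ne, hT3def, vI_mul q (pow_ne_zero _ hune) hγ, vI_pow]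
        omega
    have hmain : vI q (2 * U a b ((r' + 1) * (s'' + 2))) = e + 1 := by
      rw [hsum]
      exact vI_add_eq hq hT1ne hvT1 (dvd_add hdvdT2 hdvdT3)
    have hUne : U a b ((r' + 1) * (s'' + 2)) ≠ 0 :=
      U_ne_zero ha hD hb (Nat.one_le_iff_ne_zero.mpr (by positivity))
    rw [vI_mul q two_ne_zero hUne, hv2] at hmain
    rw [← hs''] at hmain
    omega


omit ha hD hb hab in
lemma vI_mono {q : ℕ} (hq : q.Prime) {x y : ℤ} (hx : x ≠ 0) (hy : y ≠ 0)
    (hdvd : x ∣ y) : vI q x ≤ vI q y := by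
  rw [← vI_pow_dvd_iff hq hy]
  exact (vI_dvd hq hx).trans hdvd

/-- Main valuation law at primes dividing `a`, for even indices. -/
lemma vI_U_even {q : ℕ} (hq : q.Prime) (hqa : (q : ℤ) ∣ a) :
    ∀ j, 1 ≤ j → vI q (U a b (2 * j)) = vI q a + j.factorization q := by
  have hq2 : q = 2 → (2 : ℤ) ∣ a := fun h => by subst h; exact_mod_cast hqa
  intro j
  induction j using Nat.strong_induction_on with
  | _ j ih =>
    intro hj
    by_cases hdvd : q ∣ j
    · obtain ⟨j', rfl⟩ := hdvd
      have hq0 := hq.two_le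
      have hj' : 1 ≤ j' := by
        rcases Nat.eq_zero_or_pos j' with h0 | h0
        · subst h0; simp at hj
        · exact h0
      have hqr : (q : ℤ) ∣ U a b (2 * j') := hqa.trans (a_dvd_even j')
      have e1 : 2 * (q * j') = (2 * j') * q := by ring
      rw [e1, L1 ha hD hb hab hq hq2 (by omega) hqr]
      have hlt : j' < q * j' := by
        calc j' = 1 * j' := (one_mul j').symm
        _ < q * j' := by
          apply Nat.mul_lt_mul_of_lt_of_le (by omega) (le_refl _) (by omega)
      rw [ih j' hlt hj']
      have hfac : (q * j').factorization q = 1 + j'.factorization q := by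
        rw [Nat.factorization_mul (by omega) (by omega)]
        simp [hq.factorization_self]
      omega
    · have hqr : (q : ℤ) ∣ U a b 2 := by rw [U_two]; exact hqa
      have := L2 ha hD hb hab hq hq2 (by omega) (by omega) hqr hdvd
      rw [this, U_two, Nat.factorization_eq_zero_of_not_dvd hdvd]
      omega

/-- At primes dividing `a`, odd-indexed terms are coprime to `q`. -/
lemma vI_U_odd_eq_zero {q : ℕ} (hq : q.Prime) (hqa : (q : ℤ) ∣ a) (t : ℕ) :
    vI q (U a b (2 * t + 1)) = 0 := by
  apply vI_eq_zero_of_not_dvd hq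
  intro hdvd
  obtain ⟨c, hc⟩ := odd_mod_a (a := a) (b := b) t
  have hqbt : (q : ℤ) ∣ b ^ t := by
    have : b ^ t = U a b (2 * t + 1) - a * c := by linarith
    rw [this]
    exact dvd_sub hdvd (hqa.mul_right c)
  have hqb : (q : ℤ) ∣ b := (Nat.prime_iff_prime_int.mp hq).dvd_of_dvd_pow hqbt
  exact prime_int_not_unit hq (hab.isUnit_of_dvd' hqa hqb)

/-- At primes dividing `b`, no term of index `≥ 2` is divisible by `q`. -/
lemma vI_eq_zero_of_dvd_b {q : ℕ} (hq : q.Prime) (hqb : (q : ℤ) ∣ b) {m : ℕ}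
    (hm : 2 ≤ m) : vI q (U a b m) = 0 := by
  apply vI_eq_zero_of_not_dvd hq
  intro hdvd
  obtain ⟨k, rfl⟩ : ∃ k, m = k + 2 := ⟨m - 2, by omega⟩
  obtain ⟨c, hc⟩ := U_mod_b (a := a) (b := b) (k + 1)
  have hqak : (q : ℤ) ∣ a ^ (k + 1) := by
    have : a ^ (k + 1) = U a b (k + 2) - b * c := by linarith
    rw [this]
    exact dvd_sub hdvd (hqb.mul_right c)
  have hqa : (q : ℤ) ∣ a := (Nat.prime_iff_prime_int.mp hq).dvd_of_dvd_pow hqak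
  exact prime_int_not_unit hq (hab.isUnit_of_dvd' hqa hqb)


omit ha hD hb hab in
lemma q_dvd_one_contra {q : ℕ} (hq : q.Prime) (h : (q : ℤ) ∣ (1 : ℤ)) : False :=
  prime_int_not_unit hq (isUnit_of_dvd_one h)

/-- The central equivalence. -/
lemma main_iff (ν pp : ℕ) (hν : 1 ≤ ν) (hp : pp.Prime) (hp3 : 3 ≤ pp)
    (hpn : ¬ pp ∣ 2 * ν) (K : ℕ) (hK : 0 < K) :
    (U a b (2 * ν) * U a b (2 * ν + pp) * U a b (2 * ν + 2 * pp)) ∣ U a b K ↔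
      (2 * (ν * (2 * ν + pp) * (ν + pp)) * (a.natAbs / Nat.gcd a.natAbs (2 * ν + pp))) ∣ K := by
  set aN := a.natAbs with haNdef
  set dN := Nat.gcd aN (2 * ν + pp) with hdNdef
  set a' := aN / dN with ha'def
  set L := 2 * (ν * (2 * ν + pp) * (ν + pp)) with hLdef
  have haN0 : aN ≠ 0 := Int.natAbs_ne_zero.mpr ha.ne'
  have haNa : (aN : ℤ) = a := Int.natAbs_of_nonneg ha.le
  have hdvdN : dN ∣ aN := Nat.gcd_dvd_left _ _
  have hdNpos : 0 < dN := Nat.gcd_pos_of_pos_left _ (Nat.pos_of_ne_zero haN0)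
  have ha'pos : 0 < a' := Nat.div_pos (Nat.le_of_dvd (Nat.pos_of_ne_zero haN0) hdvdN) hdNpos
  have hLpos : 0 < L := by positivity
  have hpodd : Odd pp := hp.odd_of_ne_two (by omega)
  obtain ⟨t, ht⟩ : ∃ t, 2 * ν + pp = 2 * t + 1 := by
    obtain ⟨t, ht⟩ := hpodd
    exact ⟨ν + t, by omega⟩
  -- coprimalities
  have cpn : Nat.Coprime pp (2 * ν) := hp.coprime_iff_not_dvd.mpr hpn
  have c1 : Nat.Coprime (2 * ν) (2 * ν + pp) := by
    rw [add_comm (2 * ν) pp]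
    exact Nat.coprime_add_self_right.mpr cpn.symm
  have hpnp : ¬ pp ∣ (2 * ν + pp) := by
    intro h
    have := Nat.dvd_sub h (dvd_refl pp)
    simp at this
    exact hpn this
  have c2 : Nat.Coprime (2 * ν + pp) (2 * ν + 2 * pp) := by
    have e : 2 * ν + 2 * pp = pp + (2 * ν + pp) := by ring
    rw [e]
    exact Nat.coprime_add_self_right.mpr (hp.coprime_iff_not_dvd.mpr hpnp).symm
  have cνp : Nat.Coprime ν pp := (cpn.coprime_dvd_right (dvd_mul_left ν 2)).symm
  have cν : Nat.Coprime ν (ν + pp) := by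
    rw [add_comm ν pp]
    exact Nat.coprime_add_self_right.mpr cνp
  have g2 : Nat.gcd (2 * ν) (2 * ν + 2 * pp) = 2 := by
    have e : 2 * ν + 2 * pp = 2 * (ν + pp) := by ring
    rw [e, Nat.gcd_mul_left, cν]
  -- nonvanishing
  have hU1 : U a b (2 * ν) ≠ 0 := U_ne_zero ha hD hb (by omega)
  have hU2 : U a b (2 * ν + pp) ≠ 0 := U_ne_zero ha hD hb (by omega)
  have hU3 : U a b (2 * ν + 2 * pp) ≠ 0 := U_ne_zero ha hD hb (by omega)
  have hPne : U a b (2 * ν) * U a b (2 * ν + pp) * U a b (2 * ν + 2 * pp) ≠ 0 :=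
    mul_ne_zero (mul_ne_zero hU1 hU2) hU3
  have hPsplit : ∀ q : ℕ, vI q (U a b (2 * ν) * U a b (2 * ν + pp) * U a b (2 * ν + 2 * pp))
      = vI q (U a b (2 * ν)) + vI q (U a b (2 * ν + pp)) + vI q (U a b (2 * ν + 2 * pp)) := by
    intro q
    rw [vI_mul q (mul_ne_zero hU1 hU2) hU3, vI_mul q hU1 hU2]
  have hfa' : ∀ q : ℕ, a'.factorization q
      = aN.factorization q - min (aN.factorization q) ((2 * ν + pp).factorization q) := by
    intro q
    have h1 := congrArg (fun f : ℕ →₀ ℕ => f q) (Nat.factorization_div hdvdN)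
    have h2 := congrArg (fun f : ℕ →₀ ℕ => f q) (Nat.factorization_gcd haN0 (by omega : 2 * ν + pp ≠ 0))
    simp only [Finsupp.tsub_apply, Finsupp.inf_apply] at h1 h2
    rw [← hdNdef] at h2
    rw [ha'def, h1, h2]
  -- valuations at primes dividing a
  have hval : ∀ q : ℕ, q.Prime → q ∣ aN →
      vI q (U a b (2 * ν)) = vI q a + ν.factorization q
      ∧ vI q (U a b (2 * ν + pp)) = 0
      ∧ vI q (U a b (2 * ν + 2 * pp)) = vI q a + (ν + pp).factorization q := by
    intro q hqp hqa
    have hqaZ : (q : ℤ) ∣ a := by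
      rw [← haNa]
      exact_mod_cast hqa
    refine ⟨vI_U_even ha hD hb hab hqp hqaZ ν hν, ?_, ?_⟩
    · rw [ht]
      exact vI_U_odd_eq_zero ha hD hb hab hqp hqaZ t
    · have e : 2 * ν + 2 * pp = 2 * (ν + pp) := by ring
      rw [e]
      exact vI_U_even ha hD hb hab hqp hqaZ (ν + pp) (by omega)
  constructor
  · -- forward: minimality
    intro hPU
    have hUKne : U a b K ≠ 0 := U_ne_zero ha hD hb hK
    have hU1K : U a b (2 * ν) ∣ U a b K :=
      (dvd_mul_of_dvd_left (dvd_mul_right _ _) _).trans hPU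
    have hU2K : U a b (2 * ν + pp) ∣ U a b K :=
      (dvd_mul_of_dvd_left (dvd_mul_left _ _) _).trans hPU
    have hU3K : U a b (2 * ν + 2 * pp) ∣ U a b K := (dvd_mul_left _ _).trans hPU
    have h2 : (2 * ν + pp) ∣ K := index_dvd ha hD hb hab (by omega) hK hU2K
    have h3 : (2 * ν + 2 * pp) ∣ K := index_dvd ha hD hb hab (by omega) hK hU3K
    have h1 : (2 * ν) ∣ K := by
      rcases Nat.lt_or_ge ν 2 with hν2 | hν2
      · have hν1 : ν = 1 := by omega
        have h2K : 2 ∣ K := (Dvd.intro (ν + pp) (by ring)).trans h3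
        rw [hν1, mul_one]
        exact h2K
      · exact index_dvd ha hD hb hab (by omega) hK hU1K
    -- L ∣ K
    have hLK : L ∣ K := by
      have h2K : (2 : ℕ) ∣ K := (Dvd.intro ν rfl).trans h1
      obtain ⟨h', rfl⟩ := h2K
      have hνh : ν ∣ h' := (Nat.mul_dvd_mul_iff_left (by omega : 0 < 2)).mp h1
      have hμh : (ν + pp) ∣ h' := by
        have e : 2 * ν + 2 * pp = 2 * (ν + pp) := by ring
        rw [e] at h3
        exact (Nat.mul_dvd_mul_iff_left (by omega : 0 < 2)).mp h3
      have hνμ : ν * (ν + pp) ∣ h' := cν.mul_dvd_of_dvd_of_dvd hνh hμh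
      have c2a : Nat.Coprime (2 * ν + pp) 2 :=
        ((Nat.prime_two.coprime_iff_not_dvd).mpr (by omega)).symm
      have cνx : Nat.Coprime (2 * ν + pp) ν :=
        c1.symm.coprime_dvd_right (dvd_mul_left ν 2)
      have cμx : Nat.Coprime (2 * ν + pp) (ν + pp) :=
        c2.coprime_dvd_right (Dvd.intro_left 2 (by ring))
      have hcop : Nat.Coprime (2 * ν + pp) (2 * (ν * (ν + pp))) :=
        c2a.mul_right (cνx.mul_right cμx)
      have hbig : (2 * ν + pp) * (2 * (ν * (ν + pp))) ∣ 2 * h' :=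
        hcop.mul_dvd_of_dvd_of_dvd h2 (mul_dvd_mul_left 2 hνμ)
      have e : L = (2 * ν + pp) * (2 * (ν * (ν + pp))) := by rw [hLdef]; ring
      rw [e]
      exact hbig
    obtain ⟨s, hKs⟩ := hLK
    have hs1 : 1 ≤ s := by
      rcases Nat.eq_zero_or_pos s with h0 | h0
      · rw [h0, mul_zero] at hKs; omega
      · exact h0
    have ha's : a' ∣ s := by
      rw [← Nat.factorization_le_iff_dvd (by omega) (by omega), Finsupp.le_def]
      intro q
      by_cases hqp : q.Prime
      · by_cases hqa : q ∣ aN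
        · obtain ⟨hv1, hv2, hv3⟩ := hval q hqp hqa
          have hvPK : vI q (U a b (2 * ν) * U a b (2 * ν + pp) * U a b (2 * ν + 2 * pp))
              ≤ vI q (U a b K) := vI_mono hqp hPne (U_ne_zero ha hD hb hK) hPU
          have hKe : K = 2 * (ν * (2 * ν + pp) * (ν + pp) * s) := by rw [hKs, hLdef]; ring
          have hvK : vI q (U a b K) = vI q a + (ν * (2 * ν + pp) * (ν + pp) * s).factorization q := by
            rw [hKe]
            exact vI_U_even ha hD hb hab hqp (by rw [← haNa]; exact_mod_cast hqa) _
              (Nat.one_le_iff_ne_zero.mpr (by positivity))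
          have hfs : (ν * (2 * ν + pp) * (ν + pp) * s).factorization q
              = ν.factorization q + (2 * ν + pp).factorization q + (ν + pp).factorization q
                + s.factorization q := by
            rw [Nat.factorization_mul (by positivity) (by omega),
              Nat.factorization_mul (by positivity) (by omega),
              Nat.factorization_mul (by omega) (by omega)]
            simp
          have hea : vI q a = aN.factorization q := rfl
          rw [hPsplit q, hv1, hv2, hv3, hvK, hfs] at hvPK
          rw [hfa' q]
          omega
        · rw [hfa' q, Nat.factorization_eq_zero_of_not_dvd hqa]
          omega
      · rw [Nat.factorization_eq_zero_of_not_prime _ hqp]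
        omega
    rw [hKs]
    exact Nat.mul_dvd_mul_left L ha's
  · -- backward
    intro hk0K
    obtain ⟨w, hw⟩ := hk0K
    have hPk0 : (U a b (2 * ν) * U a b (2 * ν + pp) * U a b (2 * ν + 2 * pp)) ∣ U a b (L * a') := by
      have hk0pos : 0 < L * a' := Nat.mul_pos hLpos ha'pos
      have hUk0ne : U a b (L * a') ≠ 0 := U_ne_zero ha hD hb hk0pos
      rw [← Int.natAbs_dvd_natAbs, ← Nat.factorization_le_iff_dvd
        (Int.natAbs_ne_zero.mpr hPne) (Int.natAbs_ne_zero.mpr hUk0ne), Finsupp.le_def]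
      intro q
      show vI q _ ≤ vI q _
      by_cases hqp : q.Prime
      swap
      · unfold vI
        rw [Nat.factorization_eq_zero_of_not_prime _ hqp]
        omega
      rw [hPsplit q]
      by_cases hqa : q ∣ aN
      · obtain ⟨hv1, hv2, hv3⟩ := hval q hqp hqa
        have hKe : L * a' = 2 * (ν * (2 * ν + pp) * (ν + pp) * a') := by rw [hLdef]; ring
        have hvK : vI q (U a b (L * a'))
            = vI q a + (ν * (2 * ν + pp) * (ν + pp) * a').factorization q := by
          rw [hKe]
          exact vI_U_even ha hD hb hab hqp (by rw [← haNa]; exact_mod_cast hqa) _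
            (Nat.one_le_iff_ne_zero.mpr (by positivity))
        have hfs : (ν * (2 * ν + pp) * (ν + pp) * a').factorization q
            = ν.factorization q + (2 * ν + pp).factorization q + (ν + pp).factorization q
              + a'.factorization q := by
          rw [Nat.factorization_mul (by positivity) (by omega),
            Nat.factorization_mul (by positivity) (by omega),
            Nat.factorization_mul (by omega) (by omega)]
          simp
        have hea : vI q a = aN.factorization q := rfl
        rw [hv1, hv2, hv3, hvK, hfs, hfa' q]
        omega
      · by_cases hqb : (q : ℤ) ∣ b
        · rw [vI_eq_zero_of_dvd_b ha hD hb hab hqp hqb (by omega : 2 ≤ 2 * ν),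
            vI_eq_zero_of_dvd_b ha hD hb hab hqp hqb (by omega : 2 ≤ 2 * ν + pp),
            vI_eq_zero_of_dvd_b ha hD hb hab hqp hqb (by omega : 2 ≤ 2 * ν + 2 * pp)]
          omega
        · have hk0pos' : 0 < L * a' := Nat.mul_pos hLpos ha'pos
          have hqa' : ¬ (q : ℤ) ∣ a := by
            intro hcon
            apply hqa
            rw [← haNa] at hcon
            exact_mod_cast hcon
          have hmono : ∀ m : ℕ, 1 ≤ m → m ∣ L * a' →
              vI q (U a b m) ≤ vI q (U a b (L * a')) := by
            intro m hm hdvd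
            obtain ⟨c, hc⟩ := hdvd
            exact vI_mono hqp (U_ne_zero ha hD hb hm) hUk0ne
              (by rw [hc]; exact U_dvd_U_mul m c)
          have hd1L : (2 * ν) ∣ L * a' := Dvd.intro ((2 * ν + pp) * (ν + pp) * a') (by rw [hLdef]; ring)
          have hd2L : (2 * ν + pp) ∣ L * a' := Dvd.intro (2 * ν * (ν + pp) * a') (by rw [hLdef]; ring)
          have hd3L : (2 * ν + 2 * pp) ∣ L * a' := by
            refine Dvd.intro (ν * (2 * ν + pp) * a') ?_
            rw [hLdef]; ring
          by_cases d1 : (q : ℤ) ∣ U a b (2 * ν)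
          · have hv2 : vI q (U a b (2 * ν + pp)) = 0 := by
              apply vI_eq_zero_of_not_dvd hqp
              intro d2
              have hg := dvd_U_gcd hab ((q : ℤ)) _ _ d1 d2
              rw [c1] at hg
              rw [U_one] at hg
              exact q_dvd_one_contra hqp hg
            have hv3 : vI q (U a b (2 * ν + 2 * pp)) = 0 := by
              apply vI_eq_zero_of_not_dvd hqp
              intro d3
              have hg := dvd_U_gcd hab ((q : ℤ)) _ _ d1 d3
              rw [g2, U_two] at hg
              exact hqa' hg
            have hb1 := hmono (2 * ν) (by omega) hd1L
            rw [hv2, hv3]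
            omega
          · have hv1 : vI q (U a b (2 * ν)) = 0 := vI_eq_zero_of_not_dvd hqp d1
            by_cases d2 : (q : ℤ) ∣ U a b (2 * ν + pp)
            · have hv3 : vI q (U a b (2 * ν + 2 * pp)) = 0 := by
                apply vI_eq_zero_of_not_dvd hqp
                intro d3
                have hg := dvd_U_gcd hab ((q : ℤ)) _ _ d2 d3
                rw [c2, U_one] at hg
                exact q_dvd_one_contra hqp hg
              have hb2 := hmono (2 * ν + pp) (by omega) hd2L
              rw [hv1, hv3]
              omega
            · have hv2 : vI q (U a b (2 * ν + pp)) = 0 := vI_eq_zero_of_not_dvd hqp d2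
              by_cases d3 : (q : ℤ) ∣ U a b (2 * ν + 2 * pp)
              · have hb3 := hmono (2 * ν + 2 * pp) (by omega) hd3L
                rw [hv1, hv2]
                omega
              · rw [hv1, hv2, vI_eq_zero_of_not_dvd hqp d3]
                omega
    rw [hw]
    exact hPk0.trans (U_dvd_U_mul (L * a') w)

end Rep

end Dev

theorem tau_triple_case2 (a b : ℤ) (hab : IsCoprime a b) (ha : 0 < a)
    (hΔ : 0 < a ^ 2 + 4 * b) (hnd : Nondegenerate a b)
    (n p : ℕ) (hn : 0 < n) (hp : p.Prime) (hp3 : 3 ≤ p)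
    (hpn : ¬ p ∣ n) (heven : Even n) :
    (tau a b (U a b n * U a b (n + p) * U a b (n + 2 * p)) : ℤ) =
      ((n * (n + p) * (n + 2 * p) : ℤ) / 2) * (a / (Int.gcd a (n + p) : ℤ)) := by
  obtain ⟨hbne, hmem⟩ := hnd
  obtain ⟨ν, hνν⟩ := heven
  have hn2 : n = 2 * ν := by omega
  subst hn2
  have hν : 1 ≤ ν := by omega
  have hiff := Dev.main_iff ha hΔ hbne hab ν p hν hp hp3 hpn
  set aN := a.natAbs with haNdef
  set dN := Nat.gcd aN (2 * ν + p) with hdNdef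
  set a' := aN / dN with ha'def
  set L := 2 * (ν * (2 * ν + p) * (ν + p)) with hLdef
  set k₀ := L * a' with hk₀def
  have haN0 : aN ≠ 0 := Int.natAbs_ne_zero.mpr ha.ne'
  have haNa : (aN : ℤ) = a := Int.natAbs_of_nonneg ha.le
  have hdvdN : dN ∣ aN := Nat.gcd_dvd_left _ _
  have hdNpos : 0 < dN := Nat.gcd_pos_of_pos_left _ (Nat.pos_of_ne_zero haN0)
  have ha'pos : 0 < a' := Nat.div_pos (Nat.le_of_dvd (Nat.pos_of_ne_zero haN0) hdvdN) hdNpos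
  have hLpos : 0 < L := by positivity
  have hk₀pos : 0 < k₀ := Nat.mul_pos hLpos ha'pos
  have htau : tau a b (U a b (2 * ν) * U a b (2 * ν + p) * U a b (2 * ν + 2 * p)) = k₀ := by
    have hset : {k : ℕ | 0 < k ∧
        (U a b (2 * ν) * U a b (2 * ν + p) * U a b (2 * ν + 2 * p)) ∣ U a b k}
        = {k : ℕ | 0 < k ∧ k₀ ∣ k} := by
      ext k
      simp only [Set.mem_setOf_eq]
      constructor
      · rintro ⟨hk, hdvd⟩
        exact ⟨hk, (hiff k hk).mp hdvd⟩
      · rintro ⟨hk, hdvd⟩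
        exact ⟨hk, (hiff k hk).mpr hdvd⟩
    show sInf {k : ℕ | 0 < k ∧
        (U a b (2 * ν) * U a b (2 * ν + p) * U a b (2 * ν + 2 * p)) ∣ U a b k} = k₀
    rw [hset]
    apply le_antisymm
    · exact Nat.sInf_le ⟨hk₀pos, dvd_rfl⟩
    · have hne : ({k : ℕ | 0 < k ∧ k₀ ∣ k}).Nonempty := ⟨k₀, hk₀pos, dvd_rfl⟩
      obtain ⟨hpos, hdvd⟩ := Nat.sInf_mem hne
      exact Nat.le_of_dvd hpos hdvd
  rw [htau]
  have hgcd : Int.gcd a ((((2 * ν : ℕ)) : ℤ) + (p : ℤ)) = dN := by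
    have e : (((2 * ν : ℕ)) : ℤ) + (p : ℤ) = (((2 * ν + p : ℕ)) : ℤ) := by push_cast; ring
    rw [e]
    show (a.natAbs).gcd ((((2 * ν + p : ℕ)) : ℤ)).natAbs = dN
    rw [Int.natAbs_natCast, hdNdef, haNdef]
  rw [hgcd]
  have e1 : ((((2 * ν : ℕ)) : ℤ) * ((((2 * ν : ℕ)) : ℤ) + (p : ℤ)) * ((((2 * ν : ℕ)) : ℤ) + 2 * (p : ℤ)))
      = 2 * ((L : ℕ) : ℤ) := by
    rw [hLdef]
    push_cast
    ring
  rw [e1, Int.mul_ediv_cancel_left _ (by norm_num : (2 : ℤ) ≠ 0)]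
  rw [← haNa, hk₀def, ha'def]
  push_cast [Int.natCast_ediv]
  ring
end
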